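/- arXiv:1010.3527 — 9 statements merged into one kernel-verified Lean document; each statement's English description precedes it below -/
import Mathlib

section
/- For each countable set E ⊆ 𝕋 (the unit circle ℝ/2πℤ), quasi all f ∈ C(𝕋) (i.e., the set of such f is residual in C(𝕋) with the sup norm) have the property that for every function h : E → ℂ there is a subsequence of the partial sums (sₙf) of the Fourier series of f converging pointwise to h on E. -/
/-
Fejér's polynomials drive the argument. Their translates
`∑_{k=1}^n (e_{n-k} - e_{n+k})(x - p) / k = -2i e_n(x - p) ∑_{k=1}^n sin (k (x - p)) / k`
are bounded by `10` uniformly in `n` and `p`, because the sine sums are; but the `n`-th partial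
sum keeps only the half `∑_{k=1}^n e_{n-k}(x - p) / k`, which equals the harmonic number `H_n`
at `p` and stays bounded in `n` at every `x ≠ p` (Abel summation). Dividing by `H_n → ∞` and
adding such terms to a trigonometric polynomial gives perturbations that tend to `0` uniformly,
while suitable partial sums tend to any prescribed values on a given finite set.

Hence, for every nonempty open set `V` of `E → ℂ` and every `N`, the `f` with `s_n f|_E ∈ V` for
some `n ≥ N` form a dense open set. Intersecting over a countable basis, quasi every `f` has
every `h : E → ℂ` as a cluster point, hence as a subsequential limit, of `(s_n f|_E)`.
-/

open MeasureTheory Complex Filter Topology Set TopologicalSpace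

noncomputable section

instance : Fact (0 < 2 * Real.pi) := ⟨by positivity⟩

/-- The unit circle ℝ/2πℤ. -/
abbrev UnitCircle := AddCircle (2 * Real.pi)

/-- The n-th partial sum of the Fourier series of `f`. -/
noncomputable def partialSum (n : ℕ) (f : UnitCircle → ℂ) : C(UnitCircle, ℂ) :=
  ∑ k ∈ Finset.Icc (-(n : ℤ)) (n : ℤ), fourierCoeff f k • fourier k

open ComplexConjugate

theorem residual_forall_exists_subseq_tendsto {X Z : Type*} [TopologicalSpace X]
    [TopologicalSpace Z] [SecondCountableTopology Z] {G : ℕ → X → Z}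
    (hG : ∀ n, Continuous (G n))
    (hdense : ∀ V : Set Z, IsOpen V → V.Nonempty → ∀ N, Dense {x | ∃ n ≥ N, G n x ∈ V}) :
    {x | ∀ z, ∃ φ : ℕ → ℕ, StrictMono φ ∧ Tendsto (fun j => G (φ j) x) atTop (𝓝 z)} ∈
      residual X := by
  have hmem : ∀ V ∈ countableBasis Z, ∀ N, {x | ∃ n ≥ N, G n x ∈ V} ∈ residual X := by
    intro V hV N
    have hopen : IsOpen (⋃ n ≥ N, G n ⁻¹' V) :=
      isOpen_biUnion fun n _ => (isOpen_of_mem_countableBasis hV).preimage (hG n)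
    refine residual_of_dense_open (by convert hopen using 1; ext; simp) ?_
    exact hdense V (isOpen_of_mem_countableBasis hV) (nonempty_of_mem_countableBasis hV) N
  filter_upwards [(countable_bInter_mem (countable_countableBasis Z)).2
    fun V hV => countable_iInter_mem.2 (hmem V hV)] with x hx z
  suffices MapClusterPt z atTop fun n => G n x from this.tendsto_subseq
  simp only [(isBasis_countableBasis Z).nhds_hasBasis.mapClusterPt_iff_frequently,
    frequently_atTop]
  rintro V ⟨hV, -⟩ N
  simpa using mem_iInter.1 (mem_iInter₂.1 hx V hV) N

open Finset in
theorem norm_sum_Ico_smul_le_of_antitone {E : Type*} [NormedAddCommGroup E] [NormedSpace ℝ E]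
    {z : ℕ → E} {c : ℕ → ℝ} {a b : ℕ} {S : ℝ} (hc : ∀ k ≥ a, 0 ≤ c k)
    (hanti : ∀ k ≥ a, c (k + 1) ≤ c k) (hS : ∀ j, ‖∑ k ∈ Ico a j, z k‖ ≤ S) :
    ‖∑ k ∈ Ico a b, c k • z k‖ ≤ S * c a := by
  rcases lt_or_ge b a with hba | hab
  · simpa [Finset.Ico_eq_empty_of_le hba.le] using
      mul_nonneg ((norm_nonneg _).trans (hS a)) (hc a le_rfl)
  set Z : ℕ → E := fun j => ∑ k ∈ Ico a j, z k
  have hparts : ∀ m ≥ a, ∑ k ∈ Ico a m, c k • z k =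
      ∑ k ∈ Ico a m, (c k - c (k + 1)) • Z (k + 1) + c m • Z m := by
    intro m hm
    induction m, hm using Nat.le_induction with
    | base => simp [Z]
    | succ m hm ih =>
      simp only [sum_Ico_succ_top hm, ih, Z, sub_smul, smul_add]
      abel
  calc ‖∑ k ∈ Ico a b, c k • z k‖
      ≤ ∑ k ∈ Ico a b, (c k - c (k + 1)) * S + c b * S := by
        rw [hparts b hab]
        refine (norm_add_le _ _).trans (add_le_add ((norm_sum_le _ _).trans
          (sum_le_sum fun k hk => ?_)) ?_) <;> rw [norm_smul, Real.norm_of_nonneg]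
        · exact mul_le_mul_of_nonneg_left (hS _) (sub_nonneg.2 (hanti k (mem_Ico.1 hk).1))
        · exact sub_nonneg.2 (hanti k (mem_Ico.1 hk).1)
        · exact mul_le_mul_of_nonneg_left (hS _) (hc b hab)
        · exact hc b hab
    _ = S * c a := by
        have htel : ∑ k ∈ Ico a b, (c k - c (k + 1)) = c a - c b := by
          rw [← neg_sub, ← sum_Ico_sub c hab, ← sum_neg_distrib]
          simp only [neg_sub]
        rw [← sum_mul, htel]
        ring

open Finset in
theorem norm_sum_Ico_pow_le {z : ℂ} (hz : ‖z‖ = 1) (h1 : z ≠ 1) (a b : ℕ) :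
    ‖∑ k ∈ Ico a b, z ^ k‖ ≤ 2 / ‖z - 1‖ := by
  rcases lt_or_ge b a with hba | hab
  · simp only [Finset.Ico_eq_empty_of_le hba.le, sum_empty, norm_zero]; positivity
  rw [geom_sum_Ico h1 hab, norm_div]
  gcongr
  exact (norm_sub_le _ _).trans (by simp [hz]; norm_num)

def harmonicPoly (n : ℕ) (z : ℂ) : ℂ := ∑ k ∈ Finset.Icc 1 n, (k : ℂ)⁻¹ * z ^ k

open Finset in
theorem norm_sum_Ico_inv_mul_pow_le {z : ℂ} (hz : ‖z‖ = 1) (h1 : z ≠ 1) {a : ℕ} (ha : 1 ≤ a)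
    (b : ℕ) : ‖∑ k ∈ Ico a b, (k : ℂ)⁻¹ * z ^ k‖ ≤ 2 / ‖z - 1‖ * (a : ℝ)⁻¹ := by
  have hsmul : ∀ k : ℕ, (k : ℂ)⁻¹ * z ^ k = (k : ℝ)⁻¹ • z ^ k := fun k => by
    simp [Complex.real_smul]
  simp_rw [hsmul]
  refine norm_sum_Ico_smul_le_of_antitone (fun k _ => by positivity) (fun k hk => ?_)
    (norm_sum_Ico_pow_le hz h1 a)
  gcongr
  · exact_mod_cast ha.trans hk
  · exact_mod_cast k.le_succ

theorem norm_harmonicPoly_le (n : ℕ) {z : ℂ} (hz : ‖z‖ = 1) (h1 : z ≠ 1) :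
    ‖harmonicPoly n z‖ ≤ 2 / ‖z - 1‖ := by
  simpa [harmonicPoly, ← Finset.Ico_add_one_right_eq_Icc] using
    norm_sum_Ico_inv_mul_pow_le hz h1 le_rfl (n + 1)

theorem harmonicPoly_one (n : ℕ) : harmonicPoly n 1 = harmonic n := by
  simp [harmonicPoly, harmonic_eq_sum_Icc]

theorem harmonicPoly_conj (n : ℕ) (z : ℂ) : harmonicPoly n (conj z) = conj (harmonicPoly n z) := by
  simp [harmonicPoly]

theorem norm_pow_sub_one_le {z : ℂ} (hz : ‖z‖ = 1) (k : ℕ) : ‖z ^ k - 1‖ ≤ k * ‖z - 1‖ := by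
  induction k with
  | zero => simp
  | succ k ih =>
    calc ‖z ^ (k + 1) - 1‖ = ‖z ^ k * (z - 1) + (z ^ k - 1)‖ := by ring_nf
      _ ≤ ‖z - 1‖ + k * ‖z - 1‖ := by
        refine (norm_add_le _ _).trans (add_le_add (by simp [hz]) ih)
      _ = (k + 1 : ℕ) * ‖z - 1‖ := by push_cast; ring

theorem abs_im_harmonicPoly_le_mul (n : ℕ) {z : ℂ} (hz : ‖z‖ = 1) :
    |(harmonicPoly n z).im| ≤ n * ‖z - 1‖ := by
  have hterm : ∀ k ∈ Finset.Icc 1 n, |((k : ℂ)⁻¹ * z ^ k).im| ≤ ‖z - 1‖ := by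
    intro k hk
    have hk0 : (0 : ℝ) < k := by exact_mod_cast (Finset.mem_Icc.1 hk).1
    calc |((k : ℂ)⁻¹ * z ^ k).im| = (k : ℝ)⁻¹ * |(z ^ k - 1).im| := by
          simp [abs_mul, abs_of_pos hk0]
      _ ≤ (k : ℝ)⁻¹ * (k * ‖z - 1‖) := by
          gcongr; exact (abs_im_le_norm _).trans (norm_pow_sub_one_le hz k)
      _ = ‖z - 1‖ := by field_simp
  calc |(harmonicPoly n z).im| ≤ ∑ k ∈ Finset.Icc 1 n, |((k : ℂ)⁻¹ * z ^ k).im| := by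
        rw [harmonicPoly, im_sum]; exact Finset.abs_sum_le_sum_abs _ _
    _ ≤ n * ‖z - 1‖ := by simpa using Finset.sum_le_sum hterm

theorem abs_im_harmonicPoly_le (n : ℕ) {z : ℂ} (hz : ‖z‖ = 1) : |(harmonicPoly n z).im| ≤ 5 := by
  rcases eq_or_ne z 1 with rfl | h1
  · simp [harmonicPoly_one]
  set d := ‖z - 1‖
  have hd : 0 < d := norm_pos_iff.2 (sub_ne_zero.2 h1)
  have hd2 : d ≤ 2 := (norm_sub_le _ _).trans (by simp [hz]; norm_num)
  -- split the sum where `k * d` reaches `2`: termwise bounds below, Abel's inequality above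
  set K := ⌈2 / d⌉₊
  have hK : 2 / d ≤ K := Nat.le_ceil _
  set m := min n K
  have hsplit : harmonicPoly n z =
      harmonicPoly m z + ∑ k ∈ Finset.Ico (m + 1) (n + 1), (k : ℂ)⁻¹ * z ^ k := by
    simp only [harmonicPoly, ← Finset.Ico_add_one_right_eq_Icc]
    rw [Finset.sum_Ico_consecutive _ (by omega) (by omega)]
  have head : |(harmonicPoly m z).im| ≤ 4 :=
    calc |(harmonicPoly m z).im| ≤ m * d := abs_im_harmonicPoly_le_mul m hz
      _ ≤ (2 / d + 1) * d := by
          gcongr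
          exact (Nat.cast_le.2 (min_le_right n K)).trans (Nat.ceil_lt_add_one (by positivity)).le
      _ ≤ 4 := by rw [add_mul, div_mul_cancel₀ _ hd.ne']; linarith
  have tail : |(∑ k ∈ Finset.Ico (m + 1) (n + 1), (k : ℂ)⁻¹ * z ^ k).im| ≤ 1 := by
    rcases min_cases n K with ⟨hm, -⟩ | ⟨hm, -⟩
    · simp [m, hm]
    refine (abs_im_le_norm _).trans ((norm_sum_Ico_inv_mul_pow_le hz h1 (by omega) _).trans ?_)
    rw [show m = K from hm, ← div_eq_mul_inv, div_le_one (by positivity)]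
    push_cast
    linarith
  rw [hsplit, add_im]
  exact (abs_add_le _ _).trans (by linarith)

theorem tendsto_harmonic_atTop : Tendsto (fun n => (harmonic n : ℝ)) atTop atTop :=
  tendsto_atTop_mono log_add_one_le_harmonic <| Real.tendsto_log_atTop.comp <|
    tendsto_natCast_atTop_atTop.comp (tendsto_add_atTop_nat 1)

theorem tendsto_div_harmonic (c : ℂ) : Tendsto (fun n => c / (harmonic n : ℂ)) atTop (𝓝 0) := by
  rw [tendsto_zero_iff_norm_tendsto_zero]
  simp only [norm_div, norm_ratCast]
  exact tendsto_const_nhds.div_atTop (tendsto_abs_atTop_atTop.comp tendsto_harmonic_atTop)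

namespace AddCircle

variable {T : ℝ}

def fourierTranslate (j : ℤ) (p : AddCircle T) : C(AddCircle T, ℂ) :=
  (fourier (-j) p : ℂ) • fourier j

theorem fourierTranslate_apply (j : ℤ) (p x : AddCircle T) :
    fourierTranslate j p x = (toCircle (x - p) : ℂ) ^ j := by
  simp only [fourierTranslate, ContinuousMap.smul_apply, smul_eq_mul, fourier_apply,
    ← Circle.coe_mul, ← Circle.coe_zpow, ← toCircle_zsmul, ← toCircle_add]
  congr 2
  rw [smul_sub, neg_smul]; abel

def fejerLow (n : ℕ) (p : AddCircle T) : C(AddCircle T, ℂ) :=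
  ∑ k ∈ Finset.Icc 1 n, (k : ℂ)⁻¹ • fourierTranslate ((n : ℤ) - k) p

def fejerHigh (n : ℕ) (p : AddCircle T) : C(AddCircle T, ℂ) :=
  ∑ k ∈ Finset.Icc 1 n, (k : ℂ)⁻¹ • fourierTranslate ((n : ℤ) + k) p

def fejerPoly (n : ℕ) (p : AddCircle T) : C(AddCircle T, ℂ) := fejerLow n p - fejerHigh n p

theorem fejerLow_apply (n : ℕ) (p x : AddCircle T) :
    fejerLow n p x = (toCircle (x - p) : ℂ) ^ n * harmonicPoly n (conj (toCircle (x - p) : ℂ)) := by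
  simp only [fejerLow, harmonicPoly, ContinuousMap.coe_sum, ContinuousMap.coe_smul,
    Finset.sum_apply, Pi.smul_apply, fourierTranslate_apply, Finset.mul_sum, smul_eq_mul,
    ← Circle.coe_inv_eq_conj, ← Circle.coe_zpow, ← Circle.coe_pow]
  refine Finset.sum_congr rfl fun k _ => ?_
  rw [zpow_sub, zpow_natCast, zpow_natCast, inv_pow]
  simp only [Circle.coe_mul, Circle.coe_pow, Circle.coe_inv]
  ring

theorem fejerHigh_apply (n : ℕ) (p x : AddCircle T) :
    fejerHigh n p x = (toCircle (x - p) : ℂ) ^ n * harmonicPoly n (toCircle (x - p) : ℂ) := by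
  simp only [fejerHigh, harmonicPoly, ContinuousMap.coe_sum, ContinuousMap.coe_smul,
    Finset.sum_apply, Pi.smul_apply, fourierTranslate_apply, Finset.mul_sum, smul_eq_mul,
    zpow_add₀ (Circle.coe_ne_zero _), zpow_natCast]
  refine Finset.sum_congr rfl fun k _ => ?_
  ring

theorem fejerLow_self (n : ℕ) (p : AddCircle T) : fejerLow n p p = harmonic n := by
  simp [fejerLow_apply, harmonicPoly_one]

variable [Fact (0 < T)]

theorem norm_fourierCoeff_le (f : C(AddCircle T, ℂ)) (k : ℤ) : ‖fourierCoeff f k‖ ≤ ‖f‖ := by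
  refine (norm_integral_le_of_norm_le_const (C := ‖f‖) (.of_forall fun t => ?_)).trans_eq ?_
  · simpa [Circle.norm_coe] using f.norm_coe_le_norm t
  · simp

variable (T) in
def fourierCoeffCLM (k : ℤ) : C(AddCircle T, ℂ) →L[ℂ] ℂ :=
  LinearMap.mkContinuous
    { toFun := fun f => fourierCoeff f k
      map_add' := fun f g => by
        have hint : ∀ f : C(AddCircle T, ℂ), Integrable f haarAddCircle := fun f =>
          f.continuous.integrable_of_hasCompactSupport (.of_compactSpace _)
        simp [ContinuousMap.coe_add, fourierCoeff.add (hint f) (hint g)]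
      map_smul' := fun c f => fourierCoeff.const_smul f c k }
    1 fun f => by simpa using norm_fourierCoeff_le f k

@[simp]
theorem fourierCoeffCLM_apply (k : ℤ) (f : C(AddCircle T, ℂ)) :
    fourierCoeffCLM T k f = fourierCoeff f k := rfl

variable (T) in
def fourierPartialSum (n : ℕ) : C(AddCircle T, ℂ) →L[ℂ] C(AddCircle T, ℂ) :=
  ∑ k ∈ Finset.Icc (-(n : ℤ)) n, (fourierCoeffCLM T k).smulRight (fourier k)

theorem fourierPartialSum_apply (n : ℕ) (f : C(AddCircle T, ℂ)) :
    fourierPartialSum T n f = ∑ k ∈ Finset.Icc (-(n : ℤ)) n, fourierCoeff f k • fourier k := by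
  simp [fourierPartialSum]

theorem fourierPartialSum_fourier (n : ℕ) (j : ℤ) :
    fourierPartialSum T n (fourier j) = if j.natAbs ≤ n then fourier j else 0 := by
  simp only [fourierPartialSum_apply, fourierCoeff_fourier, Pi.single_apply, ite_smul, one_smul,
    zero_smul, Finset.sum_ite_eq', Finset.mem_Icc]
  exact if_congr (by omega) rfl rfl

theorem eventually_fourierPartialSum_eq_self {P : C(AddCircle T, ℂ)}
    (hP : P ∈ Submodule.span ℂ (range fourier)) : ∀ᶠ n in atTop, fourierPartialSum T n P = P := by
  induction hP using Submodule.span_induction with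
  | mem _ h =>
    obtain ⟨j, rfl⟩ := h
    filter_upwards [eventually_ge_atTop j.natAbs] with n hn
    simp [fourierPartialSum_fourier, hn]
  | zero => simp
  | add _ _ _ _ hP hQ =>
    filter_upwards [hP, hQ] with n hPn hQn
    rw [map_add, hPn, hQn]
  | smul c _ _ hP =>
    filter_upwards [hP] with n hPn
    rw [map_smul, hPn]

theorem fourierPartialSum_fourierTranslate (n : ℕ) (j : ℤ) (p : AddCircle T) :
    fourierPartialSum T n (fourierTranslate j p) =
      if j.natAbs ≤ n then fourierTranslate j p else 0 := by
  rw [fourierTranslate, map_smul, fourierPartialSum_fourier]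
  split_ifs <;> simp

theorem norm_fejerPoly_le (n : ℕ) (p : AddCircle T) : ‖fejerPoly n p‖ ≤ 10 := by
  refine (ContinuousMap.norm_le _ (by norm_num)).2 fun x => ?_
  set w := harmonicPoly n (toCircle (x - p) : ℂ)
  have hw : |w.im| ≤ 5 := abs_im_harmonicPoly_le n (Circle.norm_coe _)
  calc ‖fejerPoly n p x‖ = ‖conj w - w‖ := by
        simp [fejerPoly, fejerLow_apply, fejerHigh_apply, harmonicPoly_conj, w, ← mul_sub,
          Circle.norm_coe]
    _ = 2 * |w.im| := by
        rw [← norm_neg, neg_sub, sub_conj, norm_mul, norm_I, mul_one, norm_real, Real.norm_eq_abs,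
          abs_mul, abs_two]
    _ ≤ 10 := by linarith

theorem norm_fejerLow_apply_le (n : ℕ) {p x : AddCircle T} (hxp : x ≠ p) :
    ‖fejerLow n p x‖ ≤ 2 / ‖(toCircle (x - p) : ℂ) - 1‖ := by
  have hne : conj (toCircle (x - p) : ℂ) ≠ 1 := by
    rw [← Circle.coe_inv_eq_conj, Ne, Circle.coe_eq_one, inv_eq_one, ← toCircle_zero (T := T)]
    exact (injective_toCircle (Fact.out : (0 : ℝ) < T).ne').ne (sub_ne_zero.2 hxp)
  have hconj : ‖conj (toCircle (x - p) : ℂ) - 1‖ = ‖(toCircle (x - p) : ℂ) - 1‖ := by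
    rw [← Complex.norm_conj, map_sub, Complex.conj_conj, map_one]
  rw [fejerLow_apply, norm_mul, norm_pow, Circle.norm_coe, one_pow, one_mul, ← hconj]
  exact norm_harmonicPoly_le n (by simp [Circle.norm_coe]) hne

theorem fourierPartialSum_fejerLow (n : ℕ) (p : AddCircle T) :
    fourierPartialSum T n (fejerLow n p) = fejerLow n p := by
  simp only [fejerLow, map_sum, map_smul, fourierPartialSum_fourierTranslate]
  refine Finset.sum_congr rfl fun k hk => ?_
  rw [Finset.mem_Icc] at hk
  rw [if_pos (by omega)]

theorem fourierPartialSum_fejerHigh (n : ℕ) (p : AddCircle T) :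
    fourierPartialSum T n (fejerHigh n p) = 0 := by
  simp only [fejerHigh, map_sum, map_smul, fourierPartialSum_fourierTranslate]
  refine Finset.sum_eq_zero fun k hk => ?_
  rw [Finset.mem_Icc] at hk
  rw [if_neg (by omega), smul_zero]

theorem fourierPartialSum_fejerPoly (n : ℕ) (p : AddCircle T) :
    fourierPartialSum T n (fejerPoly n p) = fejerLow n p := by
  rw [fejerPoly, map_sub, fourierPartialSum_fejerLow, fourierPartialSum_fejerHigh, sub_zero]

def fejerPerturbation (s : Finset (AddCircle T)) (w : AddCircle T → ℂ) (n : ℕ) :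
    C(AddCircle T, ℂ) :=
  ∑ p ∈ s, (w p / harmonic n) • fejerPoly n p

theorem tendsto_fejerPerturbation (s : Finset (AddCircle T)) (w : AddCircle T → ℂ) :
    Tendsto (fejerPerturbation s w) atTop (𝓝 0) := by
  have := tendsto_finsetSum s fun p _ => (tendsto_div_harmonic (w p)).zero_smul_isBoundedUnder_le
    (isBoundedUnder_of ⟨10, fun n => norm_fejerPoly_le n p⟩)
  rwa [Finset.sum_const_zero] at this

theorem fourierPartialSum_fejerPerturbation_apply (s : Finset (AddCircle T)) (w : AddCircle T → ℂ)
    {n : ℕ} (hn : n ≠ 0) {q : AddCircle T} (hq : q ∈ s) :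
    fourierPartialSum T n (fejerPerturbation s w n) q =
      w q + ∑ p ∈ s.erase q, w p / harmonic n * fejerLow n p q := by
  have hH : (harmonic n : ℂ) ≠ 0 := by exact_mod_cast (harmonic_pos hn).ne'
  simp only [fejerPerturbation, map_sum, map_smul, fourierPartialSum_fejerPoly,
    ContinuousMap.coe_sum, ContinuousMap.coe_smul, Finset.sum_apply, Pi.smul_apply, smul_eq_mul]
  rw [← Finset.add_sum_erase _ _ hq, fejerLow_self, div_mul_cancel₀ _ hH]

theorem tendsto_fourierPartialSum_fejerPerturbation (s : Finset (AddCircle T))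
    (w : AddCircle T → ℂ) {q : AddCircle T} (hq : q ∈ s) :
    Tendsto (fun n => fourierPartialSum T n (fejerPerturbation s w n) q) atTop (𝓝 (w q)) := by
  have hoff :
      Tendsto (fun n => ∑ p ∈ s.erase q, w p / harmonic n * fejerLow n p q) atTop (𝓝 0) := by
    have hterm : ∀ p ∈ s.erase q,
        Tendsto (fun n => w p / harmonic n * fejerLow n p q) atTop (𝓝 0) := fun p hp =>
      (tendsto_div_harmonic (w p)).zero_smul_isBoundedUnder_le (isBoundedUnder_of
        ⟨2 / ‖(toCircle (q - p) : ℂ) - 1‖,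
          fun n => norm_fejerLow_apply_le n (Finset.ne_of_mem_erase hp).symm⟩)
    simpa using tendsto_finsetSum _ hterm
  have hlim := tendsto_const_nhds (x := w q) |>.add hoff
  rw [add_zero] at hlim
  refine hlim.congr' ?_
  filter_upwards [eventually_ne_atTop 0] with n hn
  rw [fourierPartialSum_fejerPerturbation_apply s w hn hq]

theorem exists_tendsto_fourierPartialSum {P : C(AddCircle T, ℂ)}
    (hP : P ∈ Submodule.span ℂ (range fourier)) (s : Finset (AddCircle T)) (w : AddCircle T → ℂ) :
    ∃ f : ℕ → C(AddCircle T, ℂ), Tendsto f atTop (𝓝 P) ∧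
      ∀ q ∈ s, Tendsto (fun n => fourierPartialSum T n (f n) q) atTop (𝓝 (w q)) := by
  refine ⟨fun n => P + fejerPerturbation s (w - P) n, ?_, fun q hq => ?_⟩
  · simpa using tendsto_const_nhds.add (tendsto_fejerPerturbation s (w - P))
  · have hlim := tendsto_const_nhds (x := P q) |>.add
      (tendsto_fourierPartialSum_fejerPerturbation s (w - P) hq)
    rw [Pi.sub_apply, add_sub_cancel] at hlim
    refine hlim.congr' ?_
    filter_upwards [eventually_fourierPartialSum_eq_self hP] with n hn
    rw [map_add, hn, ContinuousMap.add_apply]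

theorem dense_setOf_exists_fourierPartialSum_mem (E : Set (AddCircle T)) {V : Set (E → ℂ)}
    (hV : IsOpen V) (hVne : V.Nonempty) (N : ℕ) :
    Dense {f : C(AddCircle T, ℂ) | ∃ n ≥ N, (fun t : E => fourierPartialSum T n f t) ∈ V} := by
  obtain ⟨w, hw⟩ := hVne
  have hVw : V ∈ Filter.pi fun t => 𝓝 (w t) := by
    rw [← nhds_pi]; exact hV.mem_nhds hw
  obtain ⟨I, hI, U, hU, hIU⟩ := Filter.mem_pi.1 hVw
  have hspan : Dense (Submodule.span ℂ (range (fourier (T := T))) : Set C(AddCircle T, ℂ)) :=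
    Submodule.dense_iff_topologicalClosure_eq_top.2 span_fourier_closure_eq_top
  refine dense_closure.1 (hspan.mono fun P hP => ?_)
  obtain ⟨f, hfP, hf⟩ := exists_tendsto_fourierPartialSum hP (hI.image Subtype.val).toFinset
    (Function.extend Subtype.val w 0)
  have hfU : ∀ i ∈ I, ∀ᶠ n in atTop, fourierPartialSum T n (f n) i ∈ U i := fun i hi => by
    have := hf i (by simpa using hi)
    rw [Subtype.val_injective.extend_apply] at this
    exact this (hU i)
  refine mem_closure_of_tendsto hfP ?_
  filter_upwards [eventually_ge_atTop N, (eventually_all_finite hI).2 hfU] with n hn hnU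
  exact ⟨n, hn, hIU hnU⟩

end AddCircle

open AddCircle

theorem partialSum_eq_fourierPartialSum (n : ℕ) (f : C(UnitCircle, ℂ)) :
    partialSum n f = fourierPartialSum _ n f :=
  (fourierPartialSum_apply n f).symm

/-- For each countable `E ⊆ 𝕋`, quasi all `f ∈ C(𝕋)` have the property that every
`h : E → ℂ` is a pointwise limit on `E` of a subsequence of the Fourier partial sums of `f`. -/
theorem stmt0 (E : Set UnitCircle) (hE : E.Countable) :
    {f : C(UnitCircle, ℂ) |
      ∀ h : E → ℂ, ∃ φ : ℕ → ℕ, StrictMono φ ∧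
        ∀ t : E, Tendsto (fun j => partialSum (φ j) ⇑f t) atTop (𝓝 (h t))} ∈
      residual C(UnitCircle, ℂ) := by
  have := hE.to_subtype
  simp_rw [partialSum_eq_fourierPartialSum, ← tendsto_pi_nhds]
  refine residual_forall_exists_subseq_tendsto (fun n => ?_)
    fun V hV hVne N => dense_setOf_exists_fourierPartialSum_mem E hV hVne N
  exact continuous_pi fun t => (continuous_eval_const _).comp (fourierPartialSum _ n).continuous
end
end

section
/- If f ∈ C(𝕋) and (n_j) is any strictly increasing sequence of natural numbers, then there is a dense G_δ subset E of 𝕋 such that for every t ∈ E some subsequence of (s_{n_j}f(t))_j converges to f(t). -/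
open MeasureTheory Complex Filter Topology Set TopologicalSpace

noncomputable section

/-- The partial sum, as an element of `L²(haarAddCircle)`, is the image of the partial sum
continuous map under `toLp`. -/
lemma toLp_partialSum (f : C(UnitCircle, ℂ)) (m : ℕ) :
    (ContinuousMap.toLp (E := ℂ) 2 (AddCircle.haarAddCircle (T := 2 * Real.pi)) ℂ) (partialSum m ⇑f)
      = ∑ k ∈ Finset.Icc (-(m : ℤ)) (m : ℤ), fourierCoeff (⇑f) k • fourierLp 2 k := by
  simp only [partialSum, map_sum, _root_.map_smul]

/-- For `f ∈ C(𝕋)` and any strictly increasing `(n_j)`, there is a dense `G_δ` set `E ⊆ 𝕋`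
such that for every `t ∈ E` a subsequence of `(s_{n_j} f (t))_j` converges to `f t`. -/
theorem stmt1 (f : C(UnitCircle, ℂ)) (n : ℕ → ℕ) (hn : StrictMono n) :
    ∃ E : Set UnitCircle, Dense E ∧ IsGδ E ∧
      ∀ t ∈ E, ∃ φ : ℕ → ℕ, StrictMono φ ∧
        Tendsto (fun j => partialSum (n (φ j)) ⇑f t) atTop (𝓝 (f t)) := by
  set μ : Measure UnitCircle := AddCircle.haarAddCircle (T := 2 * Real.pi) with hμ
  set F : Lp ℂ 2 μ := ContinuousMap.toLp (E := ℂ) 2 μ ℂ f with hF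
  set G : ℕ → Lp ℂ 2 μ := fun j =>
    ContinuousMap.toLp (E := ℂ) 2 μ ℂ (partialSum (n j) ⇑f) with hG
  -- L² convergence of the partial sums along the subsequence `n`
  have hsum : HasSum (fun k : ℤ => fourierCoeff (⇑f) k • fourierLp 2 k) F := by
    have h := hasSum_fourier_series_L2 F
    have key : (fun k : ℤ => fourierCoeff (F : UnitCircle → ℂ) k • fourierLp (T := 2 * Real.pi) 2 k)
        = fun k : ℤ => fourierCoeff (⇑f) k • fourierLp (T := 2 * Real.pi) 2 k := by
      funext k
      rw [hF, fourierCoeff_toLp]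
    rwa [key] at h
  have hIcc : Tendsto (fun j : ℕ => Finset.Icc (-(n j : ℤ)) (n j : ℤ)) atTop atTop := by
    apply tendsto_atTop_finset_of_monotone
    · intro a b hab
      apply Finset.Icc_subset_Icc <;>
        simp only [neg_le_neg_iff, Int.ofNat_le] <;> exact hn.monotone hab
    · intro x
      refine ⟨x.natAbs, ?_⟩
      have h1 : (x.natAbs : ℤ) ≤ (n x.natAbs : ℤ) := by
        exact_mod_cast hn.le_apply
      have h2 : |x| ≤ (n x.natAbs : ℤ) := le_trans (le_of_eq (Int.abs_eq_natAbs x)) h1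
      rw [Finset.mem_Icc]
      constructor
      · linarith [neg_abs_le x]
      · linarith [le_abs_self x]
  have hL2 : Tendsto G atTop (𝓝 F) := by
    have h := (hsum.comp hIcc : Tendsto _ atTop (𝓝 F))
    convert h using 1
    funext j
    exact toLp_partialSum f (n j)
  -- convergence in measure, and an a.e. convergent subsequence
  have hmeas : TendstoInMeasure μ (fun j => ⇑(G j)) atTop ⇑F :=
    tendstoInMeasure_of_tendsto_Lp hL2
  obtain ⟨ψ, hψmono, hψae⟩ := hmeas.exists_seq_tendsto_ae
  -- a.e., the pointwise values of `G` and `F` agree with the continuous maps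
  have hGae : ∀ j : ℕ, ⇑(G j) =ᵐ[μ] ⇑(partialSum (n j) ⇑f) := fun j =>
    ContinuousMap.coeFn_toLp (p := 2) (μ := μ) (𝕜 := ℂ) (partialSum (n j) ⇑f)
  have hFae : ⇑F =ᵐ[μ] ⇑f := ContinuousMap.coeFn_toLp (p := 2) (μ := μ) (𝕜 := ℂ) f
  set A : Set UnitCircle :=
    {t | Tendsto (fun i => partialSum (n (ψ i)) ⇑f t) atTop (𝓝 (f t))} with hA
  have hAae : ∀ᵐ t ∂μ, t ∈ A := by
    have hall : ∀ᵐ t ∂μ, ∀ j : ℕ, (G j) t = partialSum (n j) ⇑f t :=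
      ae_all_iff.mpr hGae
    filter_upwards [hψae, hall, hFae] with t ht h1 h2
    have : (fun i => partialSum (n (ψ i)) ⇑f t) = fun i => (G (ψ i)) t := by
      funext i; exact (h1 (ψ i)).symm
    rw [hA, mem_setOf_eq, this, ← h2]
    exact ht
  -- the Gδ set
  set E : Set UnitCircle := ⋂ (k : ℕ) (m : ℕ), ⋃ (j : ℕ) (_ : m ≤ j),
    {t | dist (partialSum (n j) ⇑f t) (f t) < 1 / (k + 1)} with hE
  have hopen : ∀ k j : ℕ,
      IsOpen {t | dist (partialSum (n j) ⇑f t) (f t) < 1 / ((k : ℝ) + 1)} := by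
    intro k j
    exact isOpen_lt (Continuous.dist (partialSum (n j) ⇑f).continuous f.continuous)
      continuous_const
  have hGδ : IsGδ E := by
    refine IsGδ.iInter fun k => IsGδ.iInter fun m => IsOpen.isGδ ?_
    exact isOpen_iUnion fun j => isOpen_iUnion fun _ => hopen k j
  have hAE : A ⊆ E := by
    intro t ht
    simp only [hE, mem_iInter, mem_iUnion, mem_setOf_eq]
    intro k m
    have hpos : (0 : ℝ) < 1 / ((k : ℝ) + 1) := by positivity
    rw [hA, mem_setOf_eq, Metric.tendsto_atTop] at ht
    obtain ⟨N, hN⟩ := ht _ hpos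
    refine ⟨ψ (max N m), le_trans (le_trans (le_max_right N m) hψmono.le_apply) le_rfl, ?_⟩
    exact hN (max N m) (le_max_left N m)
  have hdense : Dense E := (Measure.dense_of_ae hAae).mono hAE
  refine ⟨E, hdense, hGδ, fun t ht => ?_⟩
  -- extract a subsequence at each point of `E`
  have hfreq : ∀ k : ℕ, ∃ᶠ j in atTop,
      dist (partialSum (n j) ⇑f t) (f t) < 1 / ((k : ℝ) + 1) := by
    intro k
    rw [frequently_atTop]
    intro m
    simp only [hE, mem_iInter, mem_iUnion, mem_setOf_eq] at ht
    obtain ⟨j, hj1, hj2⟩ := ht k m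
    exact ⟨j, hj1, hj2⟩
  obtain ⟨φ, hφmono, hφ⟩ := extraction_forall_of_frequently hfreq
  refine ⟨φ, hφmono, ?_⟩
  rw [tendsto_iff_dist_tendsto_zero]
  refine squeeze_zero (fun _ => dist_nonneg) (fun k => (hφ k).le) ?_
  exact tendsto_one_div_add_atTop_nhds_zero_nat
end
end

section
/- If f ∈ C(𝕋), (n_j) is a strictly increasing sequence, A ⊆ 𝕋, and (s_{n_j}f)_j converges pointwise on A to a function h, then the set {t ∈ A : h(t) ≠ f(t)} is of first category in 𝕋. -/
/-!
The partial sums `s_N f` converge to `f` in `L²`, hence so does every subsequence. Therefore, for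
`c > 0` and `J`, the closed set of `t` with `c ≤ |s_{n_j} f t - f t|` for all `j ≥ J` has empty
interior: on a nonempty open set `U` it would force `‖s_{n_j} f - f‖₂ ≥ c ‖𝟙_U‖₂ > 0` for all
large `j`. Countably many such sets cover every `t ∈ A` with `h t ≠ f t`.
-/

open MeasureTheory Complex Filter Topology Set TopologicalSpace

noncomputable section

section

variable {X E : Type*} [TopologicalSpace X] [MeasurableSpace X] [OpensMeasurableSpace X]
  [NormedAddCommGroup E] {μ : Measure X} [μ.IsOpenPosMeasure] {p : ENNReal}

lemma eLpNorm_indicator_const_pos {U : Set X} (hU : IsOpen U) (hne : U.Nonempty) (hp : p ≠ 0)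
    {c : ℝ} (hc : c ≠ 0) : 0 < eLpNorm (U.indicator fun _ => c) p μ := by
  refine pos_iff_ne_zero.2 fun h0 => (hU.measure_ne_zero μ hne) ?_
  rw [eLpNorm_eq_zero_iff (aestronglyMeasurable_const.indicator hU.measurableSet) hp] at h0
  exact measure_mono_null (fun t ht => by simpa [ht] using hc) (ae_iff.1 h0)

lemma interior_setOf_forall_le_norm_eq_empty {g : ℕ → X → E} (hp : p ≠ 0)
    (hg : Tendsto (fun j => eLpNorm (g j) p μ) atTop (𝓝 0)) {c : ℝ} (hc : 0 < c) (J : ℕ) :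
    interior {t | ∀ j ≥ J, c ≤ ‖g j t‖} = ∅ := by
  by_contra hne
  have hpos := eLpNorm_indicator_const_pos (μ := μ) isOpen_interior
    (nonempty_iff_ne_empty.2 hne) hp hc.ne'
  obtain ⟨j, hj, hJ⟩ := ((hg.eventually_lt_const hpos).and (eventually_ge_atTop J)).exists
  refine hj.not_ge (eLpNorm_mono fun t => ?_)
  by_cases ht : t ∈ interior {t | ∀ j ≥ J, c ≤ ‖g j t‖}
  · simpa [ht, abs_of_pos hc] using interior_subset ht j hJ
  · simp [ht]

theorem isMeagre_setOf_eventually_le_norm {g : ℕ → X → E} (hcont : ∀ j, Continuous (g j))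
    (hp : p ≠ 0) (hg : Tendsto (fun j => eLpNorm (g j) p μ) atTop (𝓝 0)) :
    IsMeagre {t | ∃ c > 0, ∀ᶠ j in atTop, c ≤ ‖g j t‖} := by
  have hclosed (c : ℝ) (J : ℕ) : IsClosed {t | ∀ j ≥ J, c ≤ ‖g j t‖} := by
    simp only [ofPred_forall]
    exact isClosed_biInter fun j _ => isClosed_le continuous_const (hcont j).norm
  refine .mono ?_ (isMeagre_iUnion fun m : ℕ => isMeagre_iUnion fun J : ℕ =>
    ((hclosed _ J).isNowhereDense_iff.2
      (interior_setOf_forall_le_norm_eq_empty hp hg (c := (m + 1 : ℝ)⁻¹) (by positivity) J)).isMeagre)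
  rintro t ⟨c, hc, hev⟩
  obtain ⟨m, hm⟩ := exists_nat_one_div_lt hc
  obtain ⟨J, hJ⟩ := hev.exists_forall_of_atTop
  simp only [mem_iUnion]
  exact ⟨m, J, fun j hj => by simpa [one_div] using hm.le.trans (hJ j hj)⟩

end

open AddCircle in
lemma tendsto_eLpNorm_partialSum_sub (f : C(UnitCircle, ℂ)) :
    Tendsto (fun N : ℕ => eLpNorm (fun t => partialSum N f t - f t) 2 haarAddCircle)
      atTop (𝓝 0) := by
  let T := ContinuousMap.toLp (E := ℂ) 2 haarAddCircle ℂ (α := UnitCircle)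
  have hIcc : Tendsto (fun N : ℕ => Finset.Icc (-(N : ℤ)) N) atTop atTop :=
    tendsto_atTop_finset_of_monotone
      (fun a b hab => Finset.Icc_subset_Icc (by simpa using hab) (by simpa using hab))
      (fun k => ⟨k.natAbs, by simp only [Finset.mem_Icc]; omega⟩)
  have hT : Tendsto (fun N : ℕ => T (partialSum N f)) atTop (𝓝 (T f)) := by
    have := (hasSum_fourier_series_L2 (T f)).comp hIcc
    simp only [T, fourierCoeff_toLp] at this
    convert this using 2 with N
    simp [T, partialSum, map_sum, fourierLp]
  convert tendsto_iff_edist_tendsto_0.1 hT using 2 with N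
  exact (Lp.edist_toLp_toLp _ _ ((partialSum N f).memLp _ ℂ) (f.memLp _ ℂ)).symm

/-- If `(s_{n_j} f)_j` converges pointwise on `A` to `h`, then `{t ∈ A | h t ≠ f t}`
is of first category (meager) in `𝕋`. -/
theorem stmt2 (f : C(UnitCircle, ℂ)) (n : ℕ → ℕ) (hn : StrictMono n)
    (A : Set UnitCircle) (h : UnitCircle → ℂ)
    (hconv : ∀ t ∈ A, Tendsto (fun j => partialSum (n j) ⇑f t) atTop (𝓝 (h t))) :
    IsMeagre {t | t ∈ A ∧ h t ≠ f t} := by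
  have hL2 := (tendsto_eLpNorm_partialSum_sub f).comp hn.tendsto_atTop
  refine (isMeagre_setOf_eventually_le_norm (g := fun j t => partialSum (n j) f t - f t)
    (fun j => (partialSum (n j) f).continuous.sub f.continuous) two_ne_zero hL2).mono ?_
  rintro t ⟨htA, hne⟩
  have hlim : Tendsto (fun j => ‖partialSum (n j) f t - f t‖) atTop (𝓝 ‖h t - f t‖) :=
    ((hconv t htA).sub_const (f t)).norm
  have hpos : 0 < ‖h t - f t‖ := norm_sub_pos_iff.2 hne
  exact ⟨‖h t - f t‖ / 2, half_pos hpos, hlim.eventually_const_le (half_lt_self hpos)⟩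
end
end

section
/- For every infinite set Λ ⊆ ℕ, every g ∈ C(𝕋), every c ∈ ℂ, and every ε > 0, there exist f ∈ C(𝕋) and n ∈ Λ with ‖f − g‖_∞ < ε and sₙf(0) = c. -/
open MeasureTheory Complex Filter Topology Set TopologicalSpace

noncomputable section

/-!
Approximate `g` by a trigonometric polynomial `p`; for `n` beyond the degree of `p`,
`sₙ p (0) = p (0)`. The functional `f ↦ sₙ f (0)` has norm tending to infinity: Fejér's polynomial
of degree `2n` is bounded uniformly in `n`, while its value under this functional is the harmonic
number `Hₙ`. So a perturbation of `p` of norm `O(|c - p(0)| / Hₙ)` corrects `sₙ p (0)` to `c`,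
and since `Λ` is infinite such an `n` can be taken in `Λ`.
-/

open Finset AddCircle

theorem norm_sum_range_smul_le_of_antitone {E : Type*} [SeminormedAddCommGroup E]
    [NormedSpace ℝ E] {f : ℕ → ℝ} {z : ℕ → E} {B : ℝ} (hf : Antitone f) (hf0 : ∀ i, 0 ≤ f i)
    (hz : ∀ m, ‖∑ i ∈ range m, z i‖ ≤ B) (n : ℕ) :
    ‖∑ i ∈ range n, f i • z i‖ ≤ B * f 0 := by
  rw [sum_range_by_parts]
  calc _ ≤ ‖f (n - 1) • ∑ i ∈ range n, z i‖
        + ‖∑ i ∈ range (n - 1), (f (i + 1) - f i) • ∑ j ∈ range (i + 1), z j‖ :=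
        norm_sub_le _ _
    _ ≤ f (n - 1) * B + ∑ i ∈ range (n - 1), (f i - f (i + 1)) * B := by
        gcongr ?_ + ?_
        · rw [norm_smul, Real.norm_of_nonneg (hf0 _)]
          exact mul_le_mul_of_nonneg_left (hz n) (hf0 _)
        · refine (norm_sum_le _ _).trans (sum_le_sum fun i _ => ?_)
          rw [norm_smul, Real.norm_of_nonpos (sub_nonpos.2 (hf i.le_succ)), neg_sub]
          exact mul_le_mul_of_nonneg_left (hz _) (sub_nonneg.2 (hf i.le_succ))
    _ = B * f 0 := by rw [← sum_mul, sum_range_sub']; ring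

theorem abs_sin_nat_mul_le (k : ℕ) (x : ℝ) : |Real.sin (k * x)| ≤ k * |Real.sin x| := by
  induction k with
  | zero => simp
  | succ k ih =>
    calc |Real.sin ((k + 1 : ℕ) * x)|
        = |Real.sin (k * x) * Real.cos x + Real.cos (k * x) * Real.sin x| := by
          rw [← Real.sin_add]; push_cast; ring_nf
      _ ≤ |Real.sin (k * x)| + |Real.sin x| := by
          refine (abs_add_le _ _).trans (add_le_add ?_ ?_) <;> rw [abs_mul]
          · exact mul_le_of_le_one_right (abs_nonneg _) (Real.abs_cos_le_one x)
          · exact mul_le_of_le_one_left (abs_nonneg _) (Real.abs_cos_le_one _)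
      _ ≤ (k + 1 : ℕ) * |Real.sin x| := by push_cast; linarith

theorem abs_sin_half_mul_abs_sum_sin_le (x : ℝ) (m n : ℕ) :
    |Real.sin (x / 2)| * |∑ i ∈ range n, Real.sin ((m + i + 1) * x)| ≤ 1 := by
  have telescope : 2 * Real.sin (x / 2) * ∑ i ∈ range n, Real.sin ((m + i + 1) * x)
      = Real.cos ((m + 1 / 2) * x) - Real.cos ((m + n + 1 / 2) * x) := by
    have := sum_range_sub' (fun i : ℕ => Real.cos ((m + i + 1 / 2) * x)) n
    rw [Nat.cast_zero, add_zero] at this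
    rw [← this, mul_sum]
    refine sum_congr rfl fun i _ => ?_
    rw [Real.two_mul_sin_mul_sin, ← Real.cos_neg]
    push_cast
    ring_nf
  have : |2 * Real.sin (x / 2) * ∑ i ∈ range n, Real.sin ((m + i + 1) * x)| ≤ 2 := by
    rw [telescope]
    refine (abs_sub _ _).trans ?_
    linarith [Real.abs_cos_le_one ((m + 1 / 2) * x), Real.abs_cos_le_one ((m + n + 1 / 2) * x)]
  rw [abs_mul, abs_mul, abs_two] at this
  linarith

theorem abs_sum_range_sin_div_le_mul_abs_sin (x : ℝ) (n : ℕ) :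
    |∑ k ∈ range n, Real.sin ((k + 1) * x) / (k + 1)| ≤ n * |Real.sin x| := by
  refine (abs_sum_le_sum_abs _ _).trans ?_
  calc _ ≤ ∑ _k ∈ range n, |Real.sin x| := sum_le_sum fun k _ => by
        rw [abs_div, abs_of_pos (by positivity : (0 : ℝ) < k + 1), div_le_iff₀ (by positivity)]
        simpa [mul_comm] using abs_sin_nat_mul_le (k + 1) x
    _ = n * |Real.sin x| := by simp

theorem abs_sin_half_mul_abs_sum_sin_div_le (x : ℝ) (m n : ℕ) :
    |Real.sin (x / 2)| * |∑ i ∈ range n, Real.sin ((m + i + 1) * x) / (m + i + 1)|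
      ≤ 1 / (m + 1) := by
  have abel := norm_sum_range_smul_le_of_antitone (f := fun i : ℕ => 1 / (m + i + 1 : ℝ))
    (z := fun i : ℕ => Real.sin (x / 2) * Real.sin ((m + i + 1) * x)) (B := 1)
    (fun i j hij => by dsimp only; gcongr) (fun i => by positivity)
    (fun k => by
      rw [← mul_sum, Real.norm_eq_abs, abs_mul]
      exact abs_sin_half_mul_abs_sum_sin_le x m k) n
  simp only [smul_eq_mul, Real.norm_eq_abs] at abel
  calc _ = |∑ i ∈ range n,
            1 / (m + i + 1 : ℝ) * (Real.sin (x / 2) * Real.sin ((m + i + 1) * x))| := by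
        rw [← abs_mul, mul_sum]
        exact congrArg _ (sum_congr rfl fun i _ => by ring)
    _ ≤ 1 * (1 / (m + (0 : ℕ) + 1)) := abel
    _ = 1 / (m + 1) := by simp

theorem abs_sum_range_sin_div_le (x : ℝ) (n : ℕ) :
    |∑ k ∈ range n, Real.sin ((k + 1) * x) / (k + 1)| ≤ 3 := by
  have hsin : |Real.sin x| ≤ 2 * |Real.sin (x / 2)| :=
    calc |Real.sin x| = |2 * Real.sin (x / 2) * Real.cos (x / 2)| := by
          rw [← Real.sin_two_mul]; ring_nf
      _ ≤ 2 * |Real.sin (x / 2)| := by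
          rw [abs_mul, abs_mul, abs_two]
          exact mul_le_of_le_one_right (by positivity) (Real.abs_cos_le_one _)
  have abel := abs_sin_half_mul_abs_sum_sin_div_le x
  have hs0 := abs_nonneg (Real.sin (x / 2))
  generalize |Real.sin (x / 2)| = s at hsin abel hs0
  rcases hs0.eq_or_lt with rfl | hs
  · calc _ ≤ n * |Real.sin x| := abs_sum_range_sin_div_le_mul_abs_sin x n
      _ ≤ 3 := by nlinarith [abs_nonneg (Real.sin x)]
  -- Split at `K ≈ 1 / s`: termwise bounds before `K`, Abel summation after.
  set K := ⌊1 / s⌋₊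
  have hK : K * s ≤ 1 := (le_div_iff₀ hs).1 (Nat.floor_le (by positivity))
  have hK' : 1 < (K + 1) * s := (div_lt_iff₀ hs).1 (Nat.lt_floor_add_one _)
  have head : ∀ m ≤ K, |∑ k ∈ range m, Real.sin ((k + 1) * x) / (k + 1)| ≤ 2 := fun m hm =>
    calc _ ≤ m * |Real.sin x| := abs_sum_range_sin_div_le_mul_abs_sin x m
      _ ≤ K * (2 * s) := by gcongr
      _ ≤ 2 := by linarith
  rcases le_or_gt n K with hn | hn
  · linarith [head n hn]
  obtain ⟨N, rfl⟩ := Nat.exists_eq_add_of_le hn.le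
  have tail : |∑ j ∈ range N, Real.sin ((K + j + 1) * x) / (K + j + 1)| ≤ 1 := by
    have := abel K N
    rw [le_div_iff₀ (by positivity)] at this
    nlinarith [abs_nonneg (∑ j ∈ range N, Real.sin ((K + j + 1) * x) / (K + j + 1))]
  rw [sum_range_add]
  push_cast
  linarith [abs_add_le (∑ k ∈ range K, Real.sin ((k + 1) * x) / (k + 1))
    (∑ j ∈ range N, Real.sin ((K + j + 1) * x) / (K + j + 1)), head K le_rfl]

theorem partialSum_apply_zero (n : ℕ) (f : UnitCircle → ℂ) :
    partialSum n f 0 = ∑ k ∈ Finset.Icc (-(n : ℤ)) n, fourierCoeff f k := by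
  simp [partialSum]

def partialSumAtZero (n : ℕ) : C(UnitCircle, ℂ) →ₗ[ℂ] ℂ where
  toFun f := partialSum n f 0
  map_add' f g := by
    have integrable (h : C(UnitCircle, ℂ)) : Integrable h haarAddCircle :=
      h.continuous.integrable_of_hasCompactSupport (.of_compactSpace _)
    simp [partialSum_apply_zero, fourierCoeff.add (integrable f) (integrable g), sum_add_distrib]
  map_smul' a f := by simp [partialSum_apply_zero, fourierCoeff.const_smul, mul_sum]

theorem partialSumAtZero_apply (n : ℕ) (f : C(UnitCircle, ℂ)) :
    partialSumAtZero n f = partialSum n f 0 := rfl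

theorem partialSumAtZero_fourier (n : ℕ) (m : ℤ) :
    partialSumAtZero n (fourier m) = if m ∈ Finset.Icc (-(n : ℤ)) n then 1 else 0 := by
  simp [partialSumAtZero_apply, partialSum_apply_zero, fourierCoeff_fourier, sum_pi_single']

theorem eventually_partialSumAtZero_eq {p : C(UnitCircle, ℂ)}
    (hp : p ∈ Submodule.span ℂ (Set.range fourier)) :
    ∀ᶠ n in atTop, partialSumAtZero n p = p 0 := by
  induction hp using Submodule.span_induction with
  | mem _ h =>
    obtain ⟨m, rfl⟩ := h
    filter_upwards [eventually_ge_atTop m.natAbs] with n hn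
    rw [partialSumAtZero_fourier, fourier_eval_zero, if_pos (by rw [Finset.mem_Icc]; omega)]
  | zero => exact .of_forall fun n => by simp
  | add p q _ _ hp hq => filter_upwards [hp, hq] with n hp hq; simp [hp, hq]
  | smul a p _ hp => filter_upwards [hp] with n hp; simp [hp]

/-- Fejér's polynomial `e^{inx} · (-2i) ∑_{k=1}^n sin(kx)/k`: the sine sums are uniformly bounded,
while the frequencies `n - k` that survive in `sₙ` carry the harmonic sum `∑_{k=1}^n 1/k`. -/
def fejerPolynomial (n : ℕ) : C(UnitCircle, ℂ) :=
  ∑ k ∈ range n, ((k + 1 : ℂ))⁻¹ • (fourier ((n : ℤ) - (k + 1)) - fourier ((n : ℤ) + (k + 1)))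

theorem partialSumAtZero_fejerPolynomial (n : ℕ) :
    partialSumAtZero n (fejerPolynomial n) = ∑ k ∈ range n, (1 / (k + 1) : ℝ) := by
  simp only [fejerPolynomial, map_sum, map_smul, map_sub, partialSumAtZero_fourier]
  push_cast
  refine sum_congr rfl fun k hk => ?_
  rw [Finset.mem_range] at hk
  rw [if_pos (by rw [Finset.mem_Icc]; omega), if_neg (by rw [Finset.mem_Icc]; omega)]
  simp

theorem fourier_coe_apply_eq_exp (m : ℤ) (x : ℝ) :
    fourier m (x : UnitCircle) = cexp (m * x * I) := by
  rw [fourier_coe_apply]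
  congr 1
  field_simp [Real.pi_ne_zero]
  push_cast
  ring

theorem fejerPolynomial_coe_apply (n : ℕ) (x : ℝ) :
    fejerPolynomial n x
      = -2 * I * cexp (↑(n * x) * I) * ↑(∑ k ∈ range n, Real.sin ((k + 1) * x) / (k + 1)) := by
  simp only [fejerPolynomial, ContinuousMap.sum_apply, ContinuousMap.smul_apply,
    ContinuousMap.sub_apply, fourier_coe_apply_eq_exp]
  push_cast
  rw [mul_sum]
  refine sum_congr rfl fun k _ => ?_
  have hsub : cexp ((n - (k + 1)) * x * I) = cexp (n * x * I) * cexp (-((k + 1) * x) * I) := by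
    rw [← Complex.exp_add]; ring_nf
  have hadd : cexp ((n + (k + 1)) * x * I) = cexp (n * x * I) * cexp ((k + 1) * x * I) := by
    rw [← Complex.exp_add]; ring_nf
  rw [hsub, hadd, smul_eq_mul]
  linear_combination (I * cexp (n * x * I) / (k + 1)) * two_sin ((k + 1) * x)
    + (cexp (n * x * I) * (cexp (-((k + 1) * x) * I) - cexp ((k + 1) * x * I)) / (k + 1)) * I_sq

theorem norm_fejerPolynomial_le (n : ℕ) : ‖fejerPolynomial n‖ ≤ 6 := by
  refine (ContinuousMap.norm_le _ (by norm_num)).2 fun z => ?_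
  obtain ⟨x, rfl⟩ := QuotientAddGroup.mk_surjective z
  rw [fejerPolynomial_coe_apply, norm_mul, norm_mul, norm_exp_ofReal_mul_I, norm_real,
    Real.norm_eq_abs, show ‖-2 * I‖ = 2 by simp, mul_one]
  linarith [abs_sum_range_sin_div_le x n]

theorem eventually_exists_norm_lt_partialSumAtZero_eq (b : ℂ) {δ : ℝ} (hδ : 0 < δ) :
    ∀ᶠ n in atTop, ∃ q : C(UnitCircle, ℂ), ‖q‖ < δ ∧ partialSumAtZero n q = b := by
  have hH := Real.tendsto_sum_range_one_div_nat_succ_atTop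
  filter_upwards [hH.eventually_gt_atTop (6 * ‖b‖ / δ), hH.eventually_gt_atTop 0]
    with n hlarge hpos
  set H := ∑ k ∈ range n, (1 / (k + 1) : ℝ)
  refine ⟨(b / H) • fejerPolynomial n, ?_, ?_⟩
  · calc ‖(b / H) • fejerPolynomial n‖ ≤ ‖b‖ / H * 6 := by
          rw [norm_smul, norm_div, norm_real, Real.norm_of_nonneg hpos.le]
          gcongr
          exact norm_fejerPolynomial_le n
      _ < δ := by
          rw [div_lt_iff₀ hδ] at hlarge
          rw [div_mul_eq_mul_div, div_lt_iff₀ hpos]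
          linarith
  · rw [map_smul, partialSumAtZero_fejerPolynomial, smul_eq_mul,
      div_mul_cancel₀ _ (ofReal_ne_zero.2 hpos.ne')]

/-- For every infinite `Λ ⊆ ℕ`, `g ∈ C(𝕋)`, `c ∈ ℂ`, `ε > 0`, there exist `f ∈ C(𝕋)` and
`n ∈ Λ` with `‖f - g‖ < ε` and `sₙ f (0) = c`. -/
theorem stmt6 (Λ : Set ℕ) (hΛ : Λ.Infinite) (g : C(UnitCircle, ℂ)) (c : ℂ) (ε : ℝ)
    (hε : 0 < ε) :
    ∃ f : C(UnitCircle, ℂ), ∃ n ∈ Λ, ‖f - g‖ < ε ∧ partialSum n ⇑f 0 = c := by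
  have hg : g ∈ (Submodule.span ℂ (Set.range (@fourier (2 * Real.pi)))).topologicalClosure := by
    rw [span_fourier_closure_eq_top]
    trivial
  rw [← SetLike.mem_coe, Submodule.topologicalClosure_coe] at hg
  obtain ⟨p, hp, hpg⟩ := Metric.mem_closure_iff.1 hg (ε / 2) (half_pos hε)
  obtain ⟨n, hnΛ, hpn, q, hq, hqn⟩ := ((Nat.frequently_atTop_iff_infinite.2 hΛ).and_eventually
    ((eventually_partialSumAtZero_eq hp).and
      (eventually_exists_norm_lt_partialSumAtZero_eq (c - p 0) (half_pos hε)))).exists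
  refine ⟨p + q, n, hnΛ, ?_, ?_⟩
  · calc ‖p + q - g‖ ≤ ‖p - g‖ + ‖q‖ := by rw [add_sub_right_comm]; exact norm_add_le _ _
      _ < ε / 2 + ε / 2 := by rw [← dist_eq_norm, dist_comm]; gcongr
      _ = ε := add_halves ε
  · rw [← partialSumAtZero_apply, map_add, hpn, hqn, add_sub_cancel]
end
end

section
/- Let X be a complete metric space and (T_α)_{α∈I} a family of maps T_α : X → C(𝕋). If for every finite set E ⊆ 𝕋 the set {T_α(x)|_E : α ∈ I} is dense in ℂ^E for quasi all x ∈ X, then quasi all x ∈ X have the property that for quasi all E ∈ 𝒦(𝕋), the set {T_α(x)|_E : α ∈ I} is dense in C(E). -/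
open MeasureTheory Complex Filter Topology Set TopologicalSpace

noncomputable section

section Aux

variable {X : Type*} [MetricSpace X] {I : Type*} (T : I → X → C(UnitCircle, ℂ))

/-- The "approximation on `E` within `c`" set is open in the Hausdorff metric. -/
lemma isOpen_approxSet (x : X) (f : C(UnitCircle, ℂ)) {c : ℝ} (hc : 0 < c) :
    IsOpen {E : NonemptyCompacts UnitCircle |
      ∃ α : I, ∀ t ∈ (E : Set UnitCircle), dist (T α x t) (f t) < c} := by
  rw [Metric.isOpen_iff]
  rintro E ⟨α, hα⟩
  set g : UnitCircle → ℝ := fun t => dist (T α x t) (f t) with hg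
  have hgc : Continuous g := (T α x).continuous.dist f.continuous
  obtain ⟨t₀, ht₀E, ht₀⟩ := E.isCompact.exists_isMaxOn E.nonempty hgc.continuousOn
  have hm : g t₀ < c := hα t₀ ht₀E
  have hu : UniformContinuous g := CompactSpace.uniformContinuous_of_continuous hgc
  obtain ⟨δ, hδ, hδ'⟩ := Metric.uniformContinuous_iff.mp hu (c - g t₀) (by linarith)
  refine ⟨δ, hδ, ?_⟩
  intro E' hE'
  rw [Metric.mem_ball, Metric.NonemptyCompacts.dist_eq] at hE'
  have fin : EMetric.hausdorffEdist (E' : Set UnitCircle) (E : Set UnitCircle) ≠ ⊤ :=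
    Metric.hausdorffEdist_ne_top_of_nonempty_of_bounded E'.nonempty E.nonempty
      E'.isCompact.isBounded E.isCompact.isBounded
  refine ⟨α, fun t' ht' => ?_⟩
  obtain ⟨t, htE, htt'⟩ := Metric.exists_dist_lt_of_hausdorffDist_lt ht' hE' fin
  have h1 : dist (g t') (g t) < c - g t₀ := hδ' htt'
  have h2 : g t ≤ g t₀ := ht₀ htE
  rw [Real.dist_eq, abs_lt] at h1
  show g t' < c
  linarith [h1.2]

/-- If finite subsets of the dense set `D` admit good approximations, then the
approximation set is dense in the Hausdorff metric. -/
lemma dense_approxSet (x : X) (f : C(UnitCircle, ℂ)) {c : ℝ} (hc : 0 < c)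
    {D : Set UnitCircle} (hD : Dense D)
    (hx : ∀ F : Set UnitCircle, F.Finite → F ⊆ D →
      Dense (Set.range fun α : I => fun t : F => T α x t)) :
    Dense {E : NonemptyCompacts UnitCircle |
      ∃ α : I, ∀ t ∈ (E : Set UnitCircle), dist (T α x t) (f t) < c} := by
  rw [Metric.dense_iff]
  intro E r hr
  have hr4 : 0 < r / 4 := by linarith
  obtain ⟨t, htE, htfin, htcov⟩ :=
    Metric.finite_approx_of_totallyBounded E.isCompact.totallyBounded (r / 4) hr4
  have hchoice : ∀ y : UnitCircle, ∃ d, d ∈ D ∧ dist d y < r / 4 := by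
    intro y
    obtain ⟨d, hd1, hd2⟩ := Metric.dense_iff.mp hD y (r / 4) hr4
    exact ⟨d, hd2, Metric.mem_ball.mp hd1⟩
  choose φ hφD hφd using hchoice
  set F : Set UnitCircle := φ '' t with hF
  have hFfin : F.Finite := htfin.image φ
  have hFD : F ⊆ D := by rintro _ ⟨y, _, rfl⟩; exact hφD y
  have hFne : F.Nonempty := by
    obtain ⟨e, he⟩ := E.nonempty
    obtain ⟨y, hy⟩ := Set.mem_iUnion₂.mp (htcov he)
    exact ⟨φ y, Set.mem_image_of_mem φ hy.1⟩
  set EF : NonemptyCompacts UnitCircle := ⟨⟨F, hFfin.isCompact⟩, hFne⟩ with hEF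
  have hdist : dist EF E < r := by
    rw [Metric.NonemptyCompacts.dist_eq]
    have hle : Metric.hausdorffDist (EF : Set UnitCircle) (E : Set UnitCircle) ≤ r / 2 := by
      apply Metric.hausdorffDist_le_of_mem_dist (by linarith)
      · rintro _ ⟨y, hy, rfl⟩
        exact ⟨y, htE hy, le_of_lt (lt_of_lt_of_le (hφd y) (by linarith))⟩
      · intro e he
        obtain ⟨y, hy⟩ := Set.mem_iUnion₂.mp (htcov he)
        refine ⟨φ y, Set.mem_image_of_mem φ hy.1, ?_⟩
        have h1 : dist e y < r / 4 := Metric.mem_ball.mp hy.2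
        have h2 : dist y (φ y) < r / 4 := by rw [dist_comm]; exact hφd y
        calc dist e (φ y) ≤ dist e y + dist y (φ y) := dist_triangle _ _ _
          _ ≤ r / 2 := by linarith
    linarith
  haveI : Finite F := hFfin.to_subtype
  have hdense := hx F hFfin hFD
  set V : Set (F → ℂ) := Set.univ.pi (fun s : F => Metric.ball (f ↑s) c) with hV
  have hVopen : IsOpen V := isOpen_set_pi Set.finite_univ
    (fun s _ => Metric.isOpen_ball)
  have hVne : V.Nonempty := ⟨fun s => f ↑s, fun s _ => Metric.mem_ball_self hc⟩
  obtain ⟨h, ⟨α, rfl⟩, hhV⟩ := hdense.exists_mem_open hVopen hVne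
  refine ⟨EF, Metric.mem_ball.mpr hdist, α, ?_⟩
  intro s hs
  exact hhV ⟨s, hs⟩ (Set.mem_univ _)

end Aux

/-- If for every finite `E ⊆ 𝕋` the restrictions `{T_α x |_E : α ∈ I}` are dense in `ℂ^E`
for quasi all `x`, then quasi all `x` are such that for quasi all compact `E`,
`{T_α x |_E : α ∈ I}` is dense in `C(E)`. -/
theorem stmt8 {X : Type*} [MetricSpace X] [CompleteSpace X] {I : Type*}
    (T : I → X → C(UnitCircle, ℂ))
    (hfin : ∀ E : Set UnitCircle, E.Finite →
      {x : X | Dense (Set.range fun α : I => fun t : E => T α x t)} ∈ residual X) :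
    {x : X | {E : NonemptyCompacts UnitCircle |
        Dense (Set.range fun α : I => (T α x).restrict (E : Set UnitCircle))} ∈
          residual (NonemptyCompacts UnitCircle)} ∈ residual X := by
  obtain ⟨D, Dcnt, Ddense⟩ := exists_countable_dense UnitCircle
  obtain ⟨S, Scnt, Sdense⟩ := exists_countable_dense C(UnitCircle, ℂ)
  have h𝔉 : {F : Set UnitCircle | F.Finite ∧ F ⊆ D}.Countable :=
    Set.countable_setOf_finite_subset Dcnt
  have hA : (⋂ F ∈ {F : Set UnitCircle | F.Finite ∧ F ⊆ D},
      {x : X | Dense (Set.range fun α : I => fun t : F => T α x t)}) ∈ residual X :=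
    (countable_bInter_mem h𝔉).2 fun F hF => hfin F hF.1
  refine mem_of_superset hA ?_
  intro x hx
  simp only [Set.mem_iInter, Set.mem_setOf_eq] at hx
  have hx' : ∀ F : Set UnitCircle, F.Finite → F ⊆ D →
      Dense (Set.range fun α : I => fun t : F => T α x t) :=
    fun F h1 h2 => hx F ⟨h1, h2⟩
  -- the residual set of compacts
  have hU : (⋂ f ∈ S, ⋂ n : ℕ, {E : NonemptyCompacts UnitCircle |
      ∃ α : I, ∀ t ∈ (E : Set UnitCircle),
        dist (T α x t) (f t) < 1 / (n + 1)}) ∈ residual (NonemptyCompacts UnitCircle) := by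
    refine (countable_bInter_mem Scnt).2 fun f hf => (countable_iInter_mem).2 fun n => ?_
    have hc : (0 : ℝ) < 1 / (n + 1) := by positivity
    exact residual_of_dense_open (isOpen_approxSet T x f hc)
      (dense_approxSet T x f hc Ddense hx')
  refine mem_of_superset hU ?_
  intro E hE
  simp only [Set.mem_iInter, Set.mem_setOf_eq] at hE
  show Dense _
  haveI : CompactSpace (E : Set UnitCircle) := isCompact_iff_compactSpace.mp E.isCompact
  rw [← Set.image_univ]
  apply dense_iff_closure_eq.mpr
  rw [← dense_iff_closure_eq]
  have : DenseRange (fun α : I => (T α x).restrict (E : Set UnitCircle)) := by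
    rw [Metric.denseRange_iff]
    intro g r hr
    obtain ⟨G, hG⟩ := g.exists_restrict_eq E.isCompact.isClosed
    obtain ⟨f, hfball, hfS⟩ := Metric.dense_iff.mp Sdense G (r / 2) (by linarith)
    have hfG : dist f G < r / 2 := Metric.mem_ball.mp hfball
    obtain ⟨n, hn⟩ := exists_nat_one_div_lt (show (0:ℝ) < r / 2 by linarith)
    obtain ⟨α, hα⟩ := hE f hfS n
    refine ⟨α, ?_⟩
    rw [ContinuousMap.dist_lt_iff hr]
    intro s
    have e1 : g s = G ↑s := by rw [← hG]; rfl
    have e2 : dist (G ↑s) (f ↑s) ≤ dist G f := ContinuousMap.dist_apply_le_dist _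
    have e3 : dist (T α x ↑s) (f ↑s) < 1 / (n + 1) := hα ↑s s.2
    have e4 : (1 : ℝ) / (n + 1) < r / 2 := hn
    calc dist (g s) ((T α x).restrict (E : Set UnitCircle) s)
        = dist (G ↑s) (T α x ↑s) := by rw [e1]; rfl
      _ ≤ dist (G ↑s) (f ↑s) + dist (f ↑s) (T α x ↑s) := dist_triangle _ _ _
      _ < r := by
          rw [dist_comm G f] at e2
          rw [dist_comm (f ↑s) _] at *
          have := e2.trans_lt hfG
          linarith
    
  rwa [Set.image_univ]

end
end

section
/- For every fixed x in a metric space X and every family (T_α)_{α∈I} of maps T_α : X → C(𝕋), the set ℰ_x := {E ∈ 𝒦(𝕋) : {T_α(x)|_E : α ∈ I} is dense in C(E)} is a G_δ subset of 𝒦(𝕋). -/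
open MeasureTheory Complex Filter Topology Set TopologicalSpace

noncomputable section

/-!
Fix a countable dense set `D ⊆ C(𝕋)`. By Tietze extension the restrictions `d|_E`, `d ∈ D`, are
dense in `C(E)`, so `{T_α x |_E}` is dense in `C(E)` iff every `d|_E` lies in its closure, i.e. iff
for all `d ∈ D` and `n` some `α` has `‖T_α x - d‖_E < 1/(n+1)`. For fixed `d`, `n`, `α` this is
an open condition on `E` (`E` lies in an open subset of `𝕋`), which exhibits the set as a
countable intersection of open sets.
-/

section

universe u

variable {α : Type u} {β ι : Type*} [TopologicalSpace α]

theorem Dense.dense_image_restrict [NormalSpace α] [TopologicalSpace β] [TietzeExtension.{u} β]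
    {K : Set α} (hK : IsClosed K) {D : Set C(α, β)} (hD : Dense D) :
    Dense ((fun F : C(α, β) => F.restrict K) '' D) :=
  Function.Surjective.denseRange (ContinuousMap.exists_restrict_eq hK) |>.dense_image
    (ContinuousMap.continuous_restrict K) hD

theorem Dense.dense_iff_subset_closure {X : Type*} [TopologicalSpace X] {D s : Set X}
    (hD : Dense D) : Dense s ↔ D ⊆ closure s :=
  ⟨fun hs => hs.closure_eq ▸ subset_univ D, fun h => dense_closure.1 (hD.mono h)⟩

theorem ContinuousMap.restrict_mem_closure_range_iff [PseudoMetricSpace β] {K : Set α}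
    (hK : IsCompact K) (g : C(α, β)) (f : ι → C(α, β)) :
    g.restrict K ∈ closure (range fun i => (f i).restrict K) ↔
      ∀ n : ℕ, ∃ i, ∀ t ∈ K, dist (g t) (f i t) < 1 / (n + 1) := by
  have := isCompact_iff_compactSpace.mp hK
  simp only [Metric.mem_closure_range_iff_nat, ContinuousMap.dist_lt_iff Nat.one_div_pos_of_nat,
    Subtype.forall, ContinuousMap.restrict_apply]

theorem isOpen_setOf_forall_mem_dist_lt [PseudoMetricSpace β] (f g : C(α, β)) (ε : ℝ) :
    IsOpen {E : NonemptyCompacts α | ∀ t ∈ E, dist (f t) (g t) < ε} :=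
  NonemptyCompacts.isOpen_subsets_of_isOpen <|
    isOpen_lt (f.continuous.dist g.continuous) continuous_const

theorem isGδ_setOf_dense_range_restrict [NormalSpace α] [T2Space α] [PseudoMetricSpace β]
    [TietzeExtension.{u} β] [SeparableSpace C(α, β)] (f : ι → C(α, β)) :
    IsGδ {E : NonemptyCompacts α | Dense (range fun i => (f i).restrict (E : Set α))} := by
  obtain ⟨D, hDc, hD⟩ := exists_countable_dense C(α, β)
  have hE : {E : NonemptyCompacts α | Dense (range fun i => (f i).restrict (E : Set α))} =
      ⋂ d ∈ D, ⋂ n : ℕ, ⋃ i,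
        {E : NonemptyCompacts α | ∀ t ∈ E, dist (d t) (f i t) < 1 / (n + 1)} := by
    ext E
    simp only [mem_ofPred_eq, mem_iInter, mem_iUnion,
      (hD.dense_image_restrict E.isCompact.isClosed).dense_iff_subset_closure, forall_mem_image,
      subset_def]
    exact forall₂_congr fun d _ => d.restrict_mem_closure_range_iff E.isCompact f
  rw [hE]
  exact .biInter hDc fun d _ => .iInter fun n =>
    (isOpen_iUnion fun i => isOpen_setOf_forall_mem_dist_lt d (f i) _).isGδ

end

theorem stmt9_general {X : Type*} {I : Type*} (T : I → X → C(UnitCircle, ℂ)) (x : X) :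
    IsGδ {E : NonemptyCompacts UnitCircle |
      Dense (Set.range fun α : I => (T α x).restrict (E : Set UnitCircle))} :=
  isGδ_setOf_dense_range_restrict fun α => T α x

/-- For a fixed `x` and a family `T_α : X → C(𝕋)`, the set of compact `E` on which
`{T_α x |_E : α ∈ I}` is dense in `C(E)` is a `G_δ` subset of `𝒦(𝕋)`. -/
theorem stmt9 {X : Type*} [MetricSpace X] {I : Type*} (T : I → X → C(UnitCircle, ℂ)) (x : X) :
    IsGδ {E : NonemptyCompacts UnitCircle |
      Dense (Set.range fun α : I => (T α x).restrict (E : Set UnitCircle))} :=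
  stmt9_general T x
end
end

section
/- If f ∈ C(𝕋) and E ⊆ 𝕋 is a set such that for every function h : E → ℂ some subsequence of (sₙf) converges pointwise to h on E (and E has at least two points), then E has Lebesgue measure zero. -/
open MeasureTheory Complex Filter Topology Set TopologicalSpace

noncomputable section

/-- The `L²` partial sums of the Fourier series of a continuous map converge to it in `L²`. -/
lemma tendsto_toLp_partialSum (f : C(UnitCircle, ℂ)) :
    Tendsto (fun n => ContinuousMap.toLp (E := ℂ) 2 AddCircle.haarAddCircle ℂ (partialSum n ⇑f))
      atTop (𝓝 (ContinuousMap.toLp (E := ℂ) 2 AddCircle.haarAddCircle ℂ f)) := by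
  have hsum := hasSum_fourier_series_L2
    (ContinuousMap.toLp (E := ℂ) 2 AddCircle.haarAddCircle ℂ f)
  simp_rw [fourierCoeff_toLp] at hsum
  have hmono : Monotone (fun n : ℕ => Finset.Icc (-(n : ℤ)) (n : ℤ)) := by
    intro a b hab
    exact Finset.Icc_subset_Icc (by exact_mod_cast neg_le_neg (Int.ofNat_le.mpr hab))
      (by exact_mod_cast hab)
  have hcov : Tendsto (fun n : ℕ => Finset.Icc (-(n : ℤ)) (n : ℤ)) atTop atTop := by
    apply tendsto_atTop_finset_of_monotone hmono
    intro k
    exact ⟨k.natAbs, Finset.mem_Icc.mpr (by constructor <;> omega)⟩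
  have := (hsum.comp hcov : Tendsto _ atTop _)
  convert this using 2 with n
  unfold partialSum
  rw [map_sum]
  exact Finset.sum_congr rfl fun k _ => by rw [_root_.map_smul]

/-- If every `h : E → ℂ` is a pointwise limit on `E` of a subsequence of `(sₙ f)` and `E`
has at least two points, then `E` has Lebesgue (Haar) measure zero. -/
theorem stmt15 (f : C(UnitCircle, ℂ)) (E : Set UnitCircle)
    (hE : ∃ a ∈ E, ∃ b ∈ E, a ≠ b)
    (huniv : ∀ h : E → ℂ, ∃ φ : ℕ → ℕ, StrictMono φ ∧
      ∀ t : E, Tendsto (fun j => partialSum (φ j) ⇑f t) atTop (𝓝 (h t))) :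
    AddCircle.haarAddCircle E = 0 := by
  set μ := (AddCircle.haarAddCircle : Measure UnitCircle)
  obtain ⟨φ, hφ, hconv⟩ := huniv (fun t => f ↑t + 1)
  -- L² convergence of the subsequence
  have hLp : Tendsto (fun j => ContinuousMap.toLp (E := ℂ) 2 μ ℂ (partialSum (φ j) ⇑f))
      atTop (𝓝 (ContinuousMap.toLp (E := ℂ) 2 μ ℂ f)) :=
    (tendsto_toLp_partialSum f).comp hφ.tendsto_atTop
  -- convergence in measure, then a.e. convergence along a sub-subsequence
  have hmeas : TendstoInMeasure μ
      (fun j => ⇑(ContinuousMap.toLp (E := ℂ) 2 μ ℂ (partialSum (φ j) ⇑f))) atTop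
      (⇑(ContinuousMap.toLp (E := ℂ) 2 μ ℂ f)) :=
    MeasureTheory.tendstoInMeasure_of_tendsto_Lp hLp
  obtain ⟨ψ, hψ, hae⟩ := hmeas.exists_seq_tendsto_ae
  -- identify the a.e. representatives
  have h1 : ⇑(ContinuousMap.toLp (E := ℂ) 2 μ ℂ f) =ᵐ[μ] ⇑f :=
    ContinuousMap.coeFn_toLp (p := 2) (μ := μ) (𝕜 := ℂ) f
  have h2 : ∀ᵐ x ∂μ, ∀ j : ℕ,
      ⇑(ContinuousMap.toLp (E := ℂ) 2 μ ℂ (partialSum (φ (ψ j)) ⇑f)) x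
        = partialSum (φ (ψ j)) ⇑f x :=
    MeasureTheory.ae_all_iff.mpr fun j =>
      ContinuousMap.coeFn_toLp (p := 2) (μ := μ) (𝕜 := ℂ) (partialSum (φ (ψ j)) ⇑f)
  have hgood : ∀ᵐ x ∂μ,
      Tendsto (fun j => partialSum (φ (ψ j)) ⇑f x) atTop (𝓝 (f x)) := by
    filter_upwards [hae, h1, h2] with x hx hx1 hx2
    rw [hx1] at hx
    exact hx.congr fun j => hx2 j
  -- points of E cannot satisfy this convergence
  refine measure_mono_null (fun x hxE => ?_) (ae_iff.mp hgood)
  intro hx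
  have ht : Tendsto (fun j => partialSum (φ (ψ j)) ⇑f x) atTop (𝓝 (f x + 1)) :=
    (hconv ⟨x, hxE⟩).comp hψ.tendsto_atTop
  exact absurd (tendsto_nhds_unique hx ht) (by simp)
end
end

section
/- Let u ∈ C(𝕋), let F ⊆ 𝕋 be a finite set, let V be an open neighborhood of 0 ∈ 𝕋 disjoint from a neighborhood U of F, and let φ ∈ C(𝕋) with 0 ≤ φ ≤ 1, φ ≡ 1 on U, φ ≡ 0 on V. Then ‖sₙ(uφ) − sₙu‖_F → 0 and sₙ(uφ)(0) → 0 as n → ∞. -/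
open MeasureTheory Complex Filter Topology Set TopologicalSpace

noncomputable section

namespace LocAux

open AddCircle

lemma integrable_of_continuous {f : UnitCircle → ℂ} (hf : Continuous f) :
    Integrable f (@haarAddCircle (2 * Real.pi) _) :=
  hf.integrable_of_hasCompactSupport (IsClosed.isCompact (isClosed_tsupport _))

lemma fourier_add_arg (n : ℤ) (x y : UnitCircle) :
    fourier n (x + y) = fourier n x * fourier n y := by
  simp_rw [fourier_apply, smul_add, AddCircle.toCircle_add, Circle.coe_mul]

lemma fourierCoeff_congr_ae {f g : UnitCircle → ℂ}
    (h : f =ᵐ[@haarAddCircle (2 * Real.pi) _] g) (k : ℤ) :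
    fourierCoeff f k = fourierCoeff g k := by
  unfold fourierCoeff
  refine integral_congr_ae (h.mono fun t ht => ?_)
  show fourier (-k) t • f t = fourier (-k) t • g t
  rw [ht]

lemma fourierCoeff_sub {f g : UnitCircle → ℂ} (hf : Continuous f) (hg : Continuous g) (k : ℤ) :
    fourierCoeff (fun s => f s - g s) k = fourierCoeff f k - fourierCoeff g k := by
  unfold fourierCoeff
  rw [← integral_sub (f := fun t => fourier (-k) t • f t) (g := fun t => fourier (-k) t • g t)
    (integrable_of_continuous ((fourier (-k)).continuous.smul hf))
    (integrable_of_continuous ((fourier (-k)).continuous.smul hg))]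
  refine integral_congr_ae (ae_of_all _ fun s => ?_)
  show fourier (-k) s • (f s - g s) = fourier (-k) s • f s - fourier (-k) s • g s
  simp only [smul_eq_mul]
  ring

/-- Riemann–Lebesgue for continuous functions on the circle. -/
lemma fourierCoeff_tendsto_cofinite (g : C(UnitCircle, ℂ)) :
    Tendsto (fun k : ℤ => fourierCoeff (⇑g) k) cofinite (𝓝 0) := by
  have hm : MemLp (⇑g) 2 (@haarAddCircle (2 * Real.pi) _) :=
    g.continuous.memLp_of_hasCompactSupport (IsClosed.isCompact (isClosed_tsupport _))
  set f : Lp ℂ 2 (@haarAddCircle (2 * Real.pi) _) := hm.toLp ⇑g with hf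
  have hcoeff : ∀ k : ℤ, fourierCoeff (⇑g) k = fourierBasis.repr f k := by
    intro k
    rw [fourierBasis_repr]
    exact fourierCoeff_congr_ae hm.coeFn_toLp.symm k
  have hsum : Summable fun k : ℤ => ‖fourierBasis.repr f k‖ ^ ((2 : ENNReal).toReal) :=
    (lp.memℓp (fourierBasis.repr f)).summable (by norm_num)
  have h2 : ((2 : ENNReal).toReal) = ((2 : ℕ) : ℝ) := by norm_num
  rw [h2] at hsum
  simp_rw [Real.rpow_natCast] at hsum
  have hsq : Tendsto (fun k : ℤ => ‖fourierBasis.repr f k‖ ^ (2 : ℕ)) cofinite (𝓝 0) :=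
    hsum.tendsto_cofinite_zero
  have hnorm : Tendsto (fun k : ℤ => ‖fourierBasis.repr f k‖) cofinite (𝓝 0) := by
    have h' := (Real.continuous_sqrt.tendsto 0).comp hsq
    rw [Real.sqrt_zero] at h'
    refine h'.congr fun k => ?_
    simp only [Function.comp_apply]
    exact Real.sqrt_sq (norm_nonneg _)
  have : Tendsto (fun k : ℤ => (fourierBasis.repr f k : ℂ)) cofinite (𝓝 0) :=
    tendsto_zero_iff_norm_tendsto_zero.mpr hnorm
  exact this.congr fun k => (hcoeff k).symm

lemma fourierCoeff_fourier_mul {h : UnitCircle → ℂ} (k : ℤ) :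
    fourierCoeff (fun s : UnitCircle => fourier 1 s * h s) k = fourierCoeff h (k - 1) := by
  unfold fourierCoeff
  refine integral_congr_ae (ae_of_all _ fun s => ?_)
  show fourier (-k) s • (fourier 1 s * h s) = fourier (-(k - 1)) s • h s
  simp only [smul_eq_mul]
  rw [← mul_assoc, ← fourier_add]
  congr 2
  ring

lemma telescope (f : ℤ → ℂ) (n : ℕ) :
    ∑ k ∈ Finset.Icc (-(n : ℤ)) (n : ℤ), (f (k - 1) - f k) = f (-(n : ℤ) - 1) - f n := by
  induction n with
  | zero => simp
  | succ n ih =>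
    have h1 : Finset.Icc (-((n + 1 : ℕ) : ℤ)) ((n + 1 : ℕ) : ℤ) =
        insert (-((n + 1 : ℕ) : ℤ)) (insert ((n + 1 : ℕ) : ℤ)
          (Finset.Icc (-(n : ℤ)) (n : ℤ))) := by
      ext x
      simp only [Finset.mem_Icc, Finset.mem_insert]
      push_cast
      omega
    have h2 : ((n + 1 : ℕ) : ℤ) ∉ Finset.Icc (-(n : ℤ)) (n : ℤ) := by
      simp only [Finset.mem_Icc]; push_cast; omega
    have h3 : (-((n + 1 : ℕ) : ℤ)) ∉ insert ((n + 1 : ℕ) : ℤ)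
        (Finset.Icc (-(n : ℤ)) (n : ℤ)) := by
      simp only [Finset.mem_insert, Finset.mem_Icc]; push_cast; omega
    rw [h1, Finset.sum_insert h3, Finset.sum_insert h2, ih]
    push_cast
    ring

/-- The key localization lemma: if a continuous function vanishes on a neighborhood of `0`,
then its Fourier partial sums at `0` tend to `0`. -/
lemma partialSum_tendsto_zero (g : C(UnitCircle, ℂ)) (W : Set UnitCircle)
    (hW : IsOpen W) (h0 : (0 : UnitCircle) ∈ W) (hg : ∀ s ∈ W, g s = 0) :
    Tendsto (fun n => partialSum n (⇑g) 0) atTop (𝓝 0) := by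
  have hTpos : (0 : ℝ) < 2 * Real.pi := by positivity
  -- the denominator vanishes only at `0`
  have hden : ∀ x : UnitCircle, x ≠ 0 → fourier 1 x - 1 ≠ 0 := by
    intro x hx h
    apply hx
    have h1 : fourier 1 x = fourier 1 (0 : UnitCircle) := by
      rw [fourier_eval_zero]
      linear_combination h
    rw [fourier_one, fourier_one] at h1
    exact injective_toCircle hTpos.ne' (Subtype.coe_injective h1)
  -- the auxiliary function h
  set h : UnitCircle → ℂ := fun s => g s / (fourier 1 s - 1) with hh
  have hzeroW : ∀ s ∈ W, h s = 0 := by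
    intro s hs
    simp [hh, hg s hs]
  have hcont : Continuous h := by
    rw [continuous_iff_continuousAt]
    intro x
    by_cases hx : x ∈ W
    · have he : h =ᶠ[𝓝 x] fun _ => 0 := by
        filter_upwards [hW.mem_nhds hx] with s hs using hzeroW s hs
      exact ContinuousAt.congr continuousAt_const he.symm
    · have hx0 : x ≠ 0 := fun e => hx (e ▸ h0)
      exact (g.continuous.continuousAt).div
        (((fourier 1).continuous.sub continuous_const).continuousAt) (hden x hx0)
  have hgh : ∀ s, g s = fourier 1 s * h s - h s := by
    intro s
    by_cases hs : s ∈ W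
    · rw [hg s hs, hzeroW s hs]; ring
    · have hs0 : s ≠ 0 := fun e => hs (e ▸ h0)
      have he : fourier 1 s * h s - h s = (fourier 1 s - 1) * h s := by ring
      have he2 : h s = g s / (fourier 1 s - 1) := rfl
      rw [he, he2, mul_comm (fourier 1 s - 1)]
      exact (div_mul_cancel₀ _ (hden s hs0)).symm
  have hmulcont : Continuous fun s : UnitCircle => fourier 1 s * h s :=
    (fourier 1).continuous.mul hcont
  set H : C(UnitCircle, ℂ) := ⟨h, hcont⟩ with hH
  have hcoeff : ∀ k : ℤ, fourierCoeff (⇑g) k = fourierCoeff (⇑H) (k - 1) - fourierCoeff (⇑H) k := by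
    intro k
    have e1 : fourierCoeff (⇑g) k =
        fourierCoeff (fun s : UnitCircle => fourier 1 s * h s - h s) k := by
      congr 1
      funext s
      exact hgh s
    rw [e1, fourierCoeff_sub hmulcont hcont k, fourierCoeff_fourier_mul k]
    rfl
  -- partial sum at 0
  have hps : ∀ n : ℕ, partialSum n (⇑g) 0 =
      fourierCoeff (⇑H) (-(n : ℤ) - 1) - fourierCoeff (⇑H) (n : ℤ) := by
    intro n
    have e0 : partialSum n (⇑g) 0 = ∑ k ∈ Finset.Icc (-(n : ℤ)) (n : ℤ), fourierCoeff (⇑g) k := by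
      simp [partialSum, fourier_eval_zero]
    rw [e0, Finset.sum_congr rfl fun k _ => hcoeff k]
    exact telescope (fun k => fourierCoeff (⇑H) k) n
  -- conclude by Riemann–Lebesgue
  have hRL := fourierCoeff_tendsto_cofinite H
  have t1 : Tendsto (fun n : ℕ => (-(n : ℤ) - 1)) atTop cofinite := by
    have hinj : Function.Injective (fun n : ℕ => (-(n : ℤ) - 1)) := by
      intro a b hab; simpa using hab
    rw [← Nat.cofinite_eq_atTop]
    exact hinj.tendsto_cofinite
  have t2 : Tendsto (fun n : ℕ => (n : ℤ)) atTop cofinite := by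
    have hinj : Function.Injective (fun n : ℕ => (n : ℤ)) := fun a b hab => by simpa using hab
    rw [← Nat.cofinite_eq_atTop]
    exact hinj.tendsto_cofinite
  have hfin := (hRL.comp t1).sub (hRL.comp t2)
  rw [sub_zero] at hfin
  exact Tendsto.congr (fun n => (hps n).symm) hfin

/-- Translation of Fourier coefficients. -/
lemma fourierCoeff_translate (g : C(UnitCircle, ℂ)) (t : UnitCircle) (k : ℤ) :
    fourierCoeff (fun s : UnitCircle => g (s + t)) k = fourier k t * fourierCoeff (⇑g) k := by
  unfold fourierCoeff
  simp only [smul_eq_mul]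
  have key : (∫ s : UnitCircle, fourier (-k) s * g (s + t) ∂haarAddCircle) =
      ∫ s : UnitCircle, fourier (-k) (s - t) * g s ∂haarAddCircle := by
    have h1 := integral_add_right_eq_self (μ := (@haarAddCircle (2 * Real.pi) _))
      (fun s : UnitCircle => fourier (-k) (s - t) * g s) t
    rw [← h1]
    refine integral_congr_ae (ae_of_all _ fun s => ?_)
    simp
  have hpull : (∫ s : UnitCircle, fourier (-k) (s - t) * g s ∂haarAddCircle) =
      fourier k t * ∫ s : UnitCircle, fourier (-k) s * g s ∂haarAddCircle := by
    rw [← integral_const_mul]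
    refine integral_congr_ae (ae_of_all _ fun s => ?_)
    show fourier (-k) (s - t) * g s = fourier k t * (fourier (-k) s * g s)
    have e1 : fourier (-k) (s - t) = fourier k t * fourier (-k) s := by
      rw [sub_eq_add_neg, fourier_add_arg]
      have e2 : fourier (-k) (-t) = fourier k t := by
        simp_rw [fourier_apply, neg_zsmul, zsmul_neg, neg_neg]
      rw [e2, mul_comm]
    rw [e1]
    ring
  rw [key, hpull]

end LocAux

/-- Localization principle: if `φ ≡ 1` on a neighborhood `U` of the finite set `F` and
`φ ≡ 0` on a neighborhood `V` of `0`, then `sₙ(uφ) - sₙ u → 0` uniformly on `F` and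
`sₙ(uφ)(0) → 0`. -/
theorem stmt17 (u : C(UnitCircle, ℂ)) (F : Set UnitCircle) (hF : F.Finite)
    (U V : Set UnitCircle) (hU : IsOpen U) (hV : IsOpen V) (hFU : F ⊆ U)
    (h0V : (0 : UnitCircle) ∈ V) (hUV : Disjoint U V)
    (φ : C(UnitCircle, ℝ)) (hφ01 : ∀ t, φ t ∈ Set.Icc (0 : ℝ) 1)
    (hφU : ∀ t ∈ U, φ t = 1) (hφV : ∀ t ∈ V, φ t = 0) :
    (∀ t ∈ F,
        Tendsto (fun n => partialSum n (fun s => u s * (φ s : ℂ)) t - partialSum n ⇑u t)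
          atTop (𝓝 0)) ∧
      Tendsto (fun n => partialSum n (fun s => u s * (φ s : ℂ)) 0) atTop (𝓝 0) := by
  set G : C(UnitCircle, ℂ) := ⟨fun s => u s * (φ s : ℂ),
    u.continuous.mul (Complex.continuous_ofReal.comp φ.continuous)⟩ with hG
  have hGfun : (fun s : UnitCircle => u s * (φ s : ℂ)) = ⇑G := rfl
  constructor
  · intro t htF
    set D : C(UnitCircle, ℂ) := G - u with hD
    set Dt : C(UnitCircle, ℂ) := D.comp ⟨fun s => s + t, continuous_add_right t⟩ with hDt
    have hDtfun : ∀ s, Dt s = D (s + t) := fun s => rfl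
    have hDzero : ∀ s ∈ U, D s = 0 := by
      intro s hs
      simp only [hD, ContinuousMap.sub_apply, hG, ContinuousMap.coe_mk]
      rw [hφU s hs]
      simp
    have hkey : ∀ n : ℕ,
        partialSum n (fun s => u s * (φ s : ℂ)) t - partialSum n ⇑u t =
        partialSum n (⇑Dt) 0 := by
      intro n
      have hcD : ∀ k : ℤ, fourierCoeff (⇑D) k = fourierCoeff (⇑G) k - fourierCoeff (⇑u) k := by
        intro k
        have : (⇑D) = fun s : UnitCircle => G s - u s := rfl
        rw [this]
        exact LocAux.fourierCoeff_sub G.continuous u.continuous k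
      have hcDt : ∀ k : ℤ, fourierCoeff (⇑Dt) k = fourier k t * fourierCoeff (⇑D) k := by
        intro k
        have : (⇑Dt) = fun s : UnitCircle => D (s + t) := rfl
        rw [this]
        exact LocAux.fourierCoeff_translate D t k
      rw [hGfun]
      simp only [partialSum, ContinuousMap.coe_sum, Finset.sum_apply,
        ContinuousMap.coe_smul, Pi.smul_apply, smul_eq_mul]
      rw [← Finset.sum_sub_distrib]
      refine Finset.sum_congr rfl fun k _ => ?_
      rw [hcDt k, hcD k, fourier_eval_zero]
      ring
    have hW : IsOpen ((fun s : UnitCircle => s + t) ⁻¹' U) :=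
      hU.preimage (continuous_add_right t)
    have h0W : (0 : UnitCircle) ∈ (fun s : UnitCircle => s + t) ⁻¹' U := by
      simp only [Set.mem_preimage, zero_add]
      exact hFU htF
    have hDtzero : ∀ s ∈ (fun s : UnitCircle => s + t) ⁻¹' U, Dt s = 0 := by
      intro s hs
      rw [hDtfun s]
      exact hDzero _ hs
    have hmain := LocAux.partialSum_tendsto_zero Dt _ hW h0W hDtzero
    exact Tendsto.congr (fun n => (hkey n).symm) hmain
  · have hGzero : ∀ s ∈ V, G s = 0 := by
      intro s hs
      simp only [hG, ContinuousMap.coe_mk]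
      rw [hφV s hs]
      simp
    rw [hGfun]
    exact LocAux.partialSum_tendsto_zero G V hV h0V hGzero
end
end

section
/- Let E = F ∪ {0} ⊆ 𝕋 with F finite and 0 ∉ F. Suppose for quasi all f ∈ C(𝕋) the set {sₙf|_F : n ∈ ℕ} is dense in ℂ^F, and the single-point universality at 0 holds along every infinite Λ ⊆ ℕ (i.e., for any g ∈ C(𝕋), c ∈ ℂ, ε > 0, infinite Λ, there exist f with ‖f−g‖ < ε and n ∈ Λ with |sₙf(0) − c| < ε). Then for all g ∈ C(𝕋), ε > 0 and h : E → ℂ there exist f ∈ C(𝕋) and n ∈ ℕ with ‖f − g‖ < ε and max_{t∈E}|sₙf(t) − h(t)| < ε. -/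
open MeasureTheory Complex Filter Topology Set TopologicalSpace

noncomputable section

/-!
Pick `u` near `g` whose partial sums are dense on `F`. The indices `n` with `sₙu ≈ h` on `F`
form an infinite set `Λ`, so universality at `0` along `Λ` gives `f'` near `u` and `n ∈ Λ` with
`sₙf'(0) ≈ h 0`. Glue `f = φ u + (1 - φ) f'` with a cut-off `φ` equal to `1` near `F` and `0`
near `0`. The Dirichlet kernel is bounded away from `0` uniformly in `n` (Riemann localization),
so `sₙ` at a point changes by at most `C ‖f' - u‖` when the function is changed only away from
that point: `sₙf ≈ sₙu` on `F` and `sₙf(0) ≈ sₙf'(0)`.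
-/

open Metric AddCircle

theorem DenseRange.infinite_preimage {α X : Type*} [TopologicalSpace X] [T1Space X]
    [∀ x : X, NeBot (𝓝[≠] x)] {u : α → X} (hu : DenseRange u) {U : Set X} (hU : IsOpen U)
    (hne : U.Nonempty) : (u ⁻¹' U).Infinite := by
  intro hfin
  obtain ⟨_, hxU, ⟨n, rfl⟩, hn⟩ :=
    (hu.sdiff_finite (hfin.image u)).inter_open_nonempty U hU hne
  exact hn ⟨n, hxU, rfl⟩

theorem infinite_setOf_forall_norm_sub_lt {𝕜 ι : Type*} [NontriviallyNormedField 𝕜] [Finite ι]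
    {v : ℕ → ι → 𝕜} (hv : DenseRange v) (a : ι → 𝕜) {r : ℝ} (hr : 0 < r) :
    {n | ∀ i, ‖v n i - a i‖ < r}.Infinite := by
  cases isEmpty_or_nonempty ι
  · simpa using Set.infinite_univ
  · have := Module.punctured_nhds_neBot 𝕜 (ι → 𝕜)
    refine hv.infinite_preimage (U := {x | ∀ i, ‖x i - a i‖ < r}) ?_ ⟨a, by simpa using hr⟩
    simp only [ofPred_forall]
    exact isOpen_iInter_of_finite fun i => isOpen_lt (by fun_prop) continuous_const

section Dirichlet

variable {T : ℝ}

def dirichletKernel (n : ℕ) : C(AddCircle T, ℂ) :=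
  ∑ k ∈ Finset.Icc (-(n : ℤ)) n, fourier k

theorem dirichletKernel_succ (n : ℕ) :
    (dirichletKernel (n + 1) : C(AddCircle T, ℂ)) =
      dirichletKernel n + fourier ((n : ℤ) + 1) + fourier (-((n : ℤ) + 1)) := by
  have hIcc : Finset.Icc (-((n + 1 : ℕ) : ℤ)) (n + 1 : ℕ) =
      insert (-((n : ℤ) + 1)) (insert ((n : ℤ) + 1) (Finset.Icc (-(n : ℤ)) n)) := by
    ext k; simp only [Finset.mem_Icc, Finset.mem_insert]; omega
  rw [dirichletKernel, dirichletKernel, hIcc, Finset.sum_insert (by simp; omega),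
    Finset.sum_insert (by simp)]
  abel

theorem fourier_one_sub_one_mul_dirichletKernel (n : ℕ) (x : AddCircle T) :
    (fourier 1 x - 1) * dirichletKernel n x = fourier ((n : ℤ) + 1) x - fourier (-(n : ℤ)) x := by
  induction n with
  | zero => simp [dirichletKernel]
  | succ n ih =>
    rw [dirichletKernel_succ]
    simp only [ContinuousMap.add_apply]
    have ha : fourier ((n : ℤ) + 1 + 1) x = fourier ((n : ℤ) + 1) x * fourier 1 x := fourier_add
    have hb : fourier (-(n : ℤ)) x = fourier (-((n : ℤ) + 1)) x * fourier 1 x := by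
      rw [← fourier_add]; ring_nf
    rw [mul_add, mul_add, ih, Nat.cast_succ, ha, hb]
    ring

theorem fourier_one_ne_one [Fact (0 < T)] {x : AddCircle T} (hx : x ≠ 0) : fourier 1 x ≠ 1 := by
  rw [fourier_one, ← fourier_zero' (T := T)]
  exact fun h => hx (injective_toCircle (Fact.out : 0 < T).ne' (Circle.ext h))

theorem norm_dirichletKernel_le [Fact (0 < T)] {x : AddCircle T} (hx : x ≠ 0) (n : ℕ) :
    ‖dirichletKernel n x‖ ≤ 2 / ‖fourier 1 x - 1‖ := by
  have hpos : 0 < ‖fourier 1 x - 1‖ := norm_pos_iff.2 (sub_ne_zero.2 (fourier_one_ne_one hx))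
  rw [le_div_iff₀ hpos, mul_comm, ← norm_mul, fourier_one_sub_one_mul_dirichletKernel]
  refine (norm_sub_le _ _).trans ?_
  simp only [fourier_apply, Circle.norm_coe]
  norm_num

theorem fourier_sub_apply (k : ℤ) (t x : AddCircle T) :
    fourier k (t - x) = fourier k t * fourier (-k) x := by
  rw [sub_eq_add_neg, fourier_apply, fourier_apply, fourier_apply, smul_add, neg_smul, smul_neg,
    toCircle_add, Circle.coe_mul]

theorem exists_norm_dirichletKernel_le [Fact (0 < T)] {δ : ℝ} (hδ : 0 < δ) :
    ∃ C, ∀ n (x : AddCircle T), δ ≤ ‖x‖ → ‖dirichletKernel n x‖ ≤ C := by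
  have hK : IsCompact {x : AddCircle T | δ ≤ ‖x‖} :=
    (isClosed_le continuous_const continuous_norm).isCompact
  have hne : ∀ x ∈ {x : AddCircle T | δ ≤ ‖x‖}, x ≠ 0 := fun x hx =>
    norm_pos_iff.1 (hδ.trans_le hx)
  obtain ⟨C, hC⟩ := hK.exists_bound_of_continuousOn (f := fun x => 2 / ‖fourier 1 x - 1‖)
    (continuousOn_const.div (by fun_prop) fun x hx => by
      simpa [sub_eq_zero] using fourier_one_ne_one (hne x hx))
  exact ⟨C, fun n x hx => (norm_dirichletKernel_le (hne x hx) n).trans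
    ((Real.le_norm_self _).trans (hC x hx))⟩

end Dirichlet

theorem partialSum_apply_eq_integral {f : UnitCircle → ℂ} (hf : Integrable f haarAddCircle)
    (n : ℕ) (t : UnitCircle) :
    partialSum n f t = ∫ x, dirichletKernel n (t - x) * f x ∂haarAddCircle := by
  simp only [partialSum, dirichletKernel, ContinuousMap.coe_sum, Finset.sum_apply,
    ContinuousMap.coe_smul, Pi.smul_apply, Finset.sum_mul, smul_eq_mul]
  rw [integral_finsetSum _ fun k _ => ?_]
  · refine Finset.sum_congr rfl fun k _ => ?_
    rw [fourierCoeff, mul_comm, ← integral_const_mul]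
    congr 1 with x
    rw [fourier_sub_apply, smul_eq_mul]
    ring
  · simp_rw [fourier_sub_apply, mul_assoc]
    exact (hf.fourier_smul (-k)).const_mul _

theorem partialSum_add {f g : UnitCircle → ℂ} (hf : Integrable f haarAddCircle)
    (hg : Integrable g haarAddCircle) (n : ℕ) :
    partialSum n (f + g) = partialSum n f + partialSum n g := by
  simp only [partialSum, fourierCoeff.add hf hg, Pi.add_apply, add_smul, Finset.sum_add_distrib]

theorem ContinuousMap.integrable_haarAddCircle {T : ℝ} [Fact (0 < T)] (w : C(AddCircle T, ℂ)) :
    Integrable w haarAddCircle :=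
  w.continuous.integrable_of_hasCompactSupport (HasCompactSupport.of_compactSpace _)

theorem exists_norm_partialSum_le {δ : ℝ} (hδ : 0 < δ) :
    ∃ C, 0 ≤ C ∧ ∀ n (w : C(UnitCircle, ℂ)) t, EqOn w 0 (ball t δ) →
      ‖partialSum n w t‖ ≤ C * ‖w‖ := by
  obtain ⟨C, hC⟩ := exists_norm_dirichletKernel_le (T := 2 * Real.pi) hδ
  refine ⟨max C 0, le_max_right _ _, fun n w t hw => ?_⟩
  rw [partialSum_apply_eq_integral w.integrable_haarAddCircle]
  refine (norm_integral_le_of_norm_le_const (C := max C 0 * ‖w‖)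
    (ae_of_all _ fun x => ?_)).trans (by simp)
  by_cases hx : x ∈ ball t δ
  · rw [hw hx, Pi.zero_apply, mul_zero, norm_zero]
    positivity
  · have hδx : δ ≤ ‖t - x‖ := by
      rw [← dist_eq_norm, dist_comm]; simpa using hx
    rw [norm_mul]
    exact mul_le_mul ((hC n _ hδx).trans (le_max_left _ _)) (w.norm_coe_le_norm x)
      (norm_nonneg _) (le_max_right _ _)

theorem exists_glue_partialSum {F : Set UnitCircle} (hF : IsClosed F) {x₀ : UnitCircle}
    (hx₀ : x₀ ∉ F) :
    ∃ C, 0 ≤ C ∧ ∀ u v : C(UnitCircle, ℂ), ∃ f : C(UnitCircle, ℂ), ‖f - u‖ ≤ ‖v - u‖ ∧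
      ∀ n, (∀ t ∈ F, ‖partialSum n f t - partialSum n u t‖ ≤ C * ‖v - u‖) ∧
        ‖partialSum n f x₀ - partialSum n v x₀‖ ≤ C * ‖v - u‖ := by
  obtain ⟨δ, hδ, hdisj⟩ :=
    (disjoint_singleton_left.2 hx₀).exists_cthickenings isCompact_singleton hF
  obtain ⟨φ, hφ₀, hφ₁, hφI⟩ :=
    exists_continuous_zero_one_of_isClosed isClosed_cthickening isClosed_cthickening hdisj
  obtain ⟨C, hC, hloc⟩ := exists_norm_partialSum_le hδ
  set ψ : C(UnitCircle, ℂ) := ⟨fun x => φ x, by fun_prop⟩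
  have hmul : ∀ a w : C(UnitCircle, ℂ), ‖a‖ ≤ 1 → ‖a * w‖ ≤ ‖w‖ := fun a w ha =>
    (norm_mul_le a w).trans (mul_le_of_le_one_left (norm_nonneg w) ha)
  have hψ : ‖ψ‖ ≤ 1 := (ContinuousMap.norm_le _ zero_le_one).2 fun x => by
    obtain ⟨h₀, h₁⟩ := hφI x
    simp only [ψ, ContinuousMap.coe_mk, norm_real, Real.norm_eq_abs, abs_le]
    constructor <;> linarith
  have h1ψ : ‖1 - ψ‖ ≤ 1 := (ContinuousMap.norm_le _ zero_le_one).2 fun x => by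
    obtain ⟨h₀, h₁⟩ := hφI x
    simp only [ψ, ContinuousMap.sub_apply, ContinuousMap.one_apply, ContinuousMap.coe_mk,
      ← ofReal_one, ← ofReal_sub, norm_real, Real.norm_eq_abs, abs_le]
    constructor <;> linarith
  have hpert : ∀ n (a w : C(UnitCircle, ℂ)) t, EqOn w 0 (ball t δ) →
      ‖partialSum n ⇑(a + w) t - partialSum n a t‖ ≤ C * ‖w‖ := fun n a w t hw => by
    rw [ContinuousMap.coe_add, partialSum_add a.integrable_haarAddCircle
      w.integrable_haarAddCircle, ContinuousMap.add_apply, add_sub_cancel_left]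
    exact hloc n w t hw
  refine ⟨C, hC, fun u v => ⟨u + (1 - ψ) * (v - u), ?_, fun n => ⟨fun t ht => ?_, ?_⟩⟩⟩
  · rw [add_sub_cancel_left]
    exact hmul _ _ h1ψ
  · refine (hpert n u _ t fun x hx => ?_).trans (by gcongr; exact hmul _ _ h1ψ)
    have : φ x = 1 := hφ₁ (mem_cthickening_of_dist_le x t δ F ht (le_of_lt hx))
    simp [ψ, this]
  · rw [show u + (1 - ψ) * (v - u) = v + ψ * (u - v) by ring, ← norm_neg (v - u), neg_sub]
    refine (hpert n v _ x₀ fun x hx => ?_).trans (by gcongr; exact hmul _ _ hψ)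
    have : φ x = 0 := hφ₀ (mem_cthickening_of_dist_le x x₀ δ _ rfl (le_of_lt hx))
    simp [ψ, this]

/-- Induction step: given universality on the finite set `F` for quasi all `f`, and
single-point universality at `0` along every infinite `Λ`, one gets the joint approximation
on `E = F ∪ {0}`. -/
theorem stmt19 (F : Set UnitCircle) (hF : F.Finite) (h0F : (0 : UnitCircle) ∉ F)
    (hFuniv : {f : C(UnitCircle, ℂ) |
        Dense (Set.range fun n => fun t : F => partialSum n ⇑f t)} ∈
      residual C(UnitCircle, ℂ))
    (h0univ : ∀ Λ : Set ℕ, Λ.Infinite → ∀ g : C(UnitCircle, ℂ), ∀ c : ℂ, ∀ ε : ℝ, 0 < ε →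
      ∃ f : C(UnitCircle, ℂ), ∃ n ∈ Λ, ‖f - g‖ < ε ∧ ‖partialSum n ⇑f 0 - c‖ < ε) :
    ∀ g : C(UnitCircle, ℂ), ∀ ε : ℝ, 0 < ε →
      ∀ h : (F ∪ {0} : Set UnitCircle) → ℂ,
        ∃ f : C(UnitCircle, ℂ), ∃ n : ℕ, ‖f - g‖ < ε ∧
          ∀ t : (F ∪ {0} : Set UnitCircle), ‖partialSum n ⇑f t - h t‖ < ε := by
  intro g ε hε h
  have : Finite F := hF.to_subtype
  obtain ⟨C, hC, hglue⟩ := exists_glue_partialSum hF.isClosed h0F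
  obtain ⟨u, hu, hug⟩ := (dense_of_mem_residual hFuniv).exists_dist_lt g (half_pos hε)
  rw [dist_comm, dist_eq_norm] at hug
  obtain ⟨η, hη, hCη⟩ : ∃ η, 0 < η ∧ η + C * η = ε / 2 :=
    ⟨ε / (2 * (C + 1)), by positivity, by field_simp; ring⟩
  have hCη' : 0 ≤ C * η := mul_nonneg hC hη.le
  obtain ⟨f', n, hn, hf'u, hf'0⟩ := h0univ _ (infinite_setOf_forall_norm_sub_lt hu
    (fun t => h ⟨t, Or.inl t.2⟩) (half_pos hε)) u (h ⟨0, Or.inr rfl⟩) η hη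
  obtain ⟨f, hfu, hfn⟩ := hglue u f'
  obtain ⟨hfF, hf0⟩ := hfn n
  have hCf' : C * ‖f' - u‖ ≤ C * η := by gcongr
  refine ⟨f, n, ?_, ?_⟩
  · linarith [norm_sub_le_norm_sub_add_norm_sub f u g]
  · rintro ⟨t, ht | rfl⟩
    · have hnt : ‖partialSum n u t - h ⟨t, Or.inl ht⟩‖ < ε / 2 := hn ⟨t, ht⟩
      linarith [hfF t ht, norm_sub_le_norm_sub_add_norm_sub (partialSum n f t)
        (partialSum n u t) (h ⟨t, Or.inl ht⟩)]
    · linarith [norm_sub_le_norm_sub_add_norm_sub (partialSum n f 0)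
        (partialSum n f' 0) (h ⟨0, Or.inr rfl⟩)]
end
end
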